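/- arXiv:2603.02018 — 7 statements merged into one kernel-verified Lean document; each statement's English description precedes it below -/
import Mathlib

section
/- Let λ be a cardinal and let {γ_ξ : ξ < λ} be nonzero ordinals, each endowed with the order topology. Then the σ-product σ(∏_{ξ<λ} γ_ξ, 0) is functionally countable. -/
noncomputable section
open Ordinal Set Cardinal Order

universe u

namespace SigmaFC

abbrev _root_.Ordinal.IsLimit (o : Ordinal.{u}) : Prop := o ≠ 0 ∧ ∀ a < o, Order.succ a < o

lemma _root_.Ordinal.IsLimit.pos {o : Ordinal.{u}} (h : o.IsLimit) : 0 < o :=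
  pos_iff_ne_zero.2 h.1

lemma _root_.Ordinal.IsLimit.succ_lt {o a : Ordinal.{u}} (h : o.IsLimit) (ha : a < o) :
    Order.succ a < o := h.2 a ha

def Om : Ordinal.{u} := (Cardinal.aleph 1).ord

lemma countable_Iio {o : Ordinal.{u}} (h : o < Om.{u}) : Countable (Iio o) := by
  have h1 : o.card < Cardinal.aleph 1 := Cardinal.lt_ord.1 h
  rw [← Cardinal.succ_aleph0, Order.lt_succ_iff] at h1
  have hc : Countable o.ToType := by
    rw [← Cardinal.mk_le_aleph0_iff, Cardinal.mk_toType]; exact h1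
  exact Countable.of_equiv _ (Ordinal.ToType.mk (o := o)).toEquiv.symm

lemma countable_toType {o : Ordinal.{u}} (h : o < Om.{u}) : Countable o.ToType := by
  have h1 : o.card < Cardinal.aleph 1 := Cardinal.lt_ord.1 h
  rw [← Cardinal.succ_aleph0, Order.lt_succ_iff] at h1
  rw [← Cardinal.mk_le_aleph0_iff, Cardinal.mk_toType]; exact h1

lemma sup_lt_Om_nat (f : ℕ → Ordinal.{u}) (h : ∀ i, f i < Om.{u}) :
    (⨆ i, f i) < Om.{u} :=
  by unfold Om at *; rw [Cardinal.ord_aleph] at *; exact Ordinal.iSup_lt_omega_one h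

lemma bsup_lt_Om {α : Ordinal.{u}} (hα : α < Om.{u}) (f : ↥(Iio α) → Ordinal.{u})
    (h : ∀ c, f c < Om.{u}) : (⨆ c, f c) < Om.{u} := by
  have hc : Countable α.ToType := countable_toType hα
  have e := (Ordinal.ToType.mk (o := α)).symm
  have hr : (⨆ c, f c) = ⨆ t : α.ToType, f (e t) := by
    rw [iSup, iSup]
    congr 1
    exact (e.toEquiv.surjective.range_comp f).symm
  rw [hr]
  unfold Om at *; rw [Cardinal.ord_aleph] at *; exact Ordinal.iSup_lt_omega_one fun t => h (e t)

/-- `s` is unbounded in `ω₁`. -/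
def Unb (s : Set Ordinal.{u}) : Prop :=
  ∀ b < Om.{u}, ∃ c ∈ s, b < c ∧ c < Om.{u}

lemma not_unb {s : Set Ordinal.{u}} (h : ¬ Unb s) :
    ∃ b < Om.{u}, ∀ c ∈ s, c < Om.{u} → c ≤ b := by
  unfold Unb at h
  push_neg at h
  obtain ⟨b, hb, h2⟩ := h
  refine ⟨b, hb, fun c hc hcO => ?_⟩
  by_contra hbc
  exact absurd hcO (not_lt.2 (h2 c hc (lt_of_not_ge hbc)))

/-- increasing enumeration of a subset of ordinals, tailored to `ω₁`. -/
def enum1 (s : Set Ordinal.{u}) : Ordinal.{u} → Ordinal.{u} :=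
  Ordinal.lt_wf.fix fun α IH => sInf {b | b ∈ s ∧ ∀ c, ∀ h : c < α, IH c h < b}

lemma enum1_def (s : Set Ordinal.{u}) (α : Ordinal.{u}) :
    enum1 s α = sInf {b | b ∈ s ∧ ∀ c < α, enum1 s c < b} := by
  rw [enum1, WellFounded.fix_eq]

lemma enum1_spec {s : Set Ordinal.{u}} (hs : Unb s) :
    ∀ α < Om.{u}, (enum1 s α ∈ s ∧ enum1 s α < Om.{u}) ∧ ∀ c < α, enum1 s c < enum1 s α := by
  intro α
  induction α using Ordinal.induction with
  | h α IH =>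
    intro hα
    have hτ : (iSup fun c : Iio α => enum1 s c.1) < Om.{u} :=
      bsup_lt_Om hα (fun c : Iio α => enum1 s c.1) fun c => ((IH c.1 c.2 (c.2.trans hα)).1).2
    obtain ⟨b, hbs, hτb, hbO⟩ := hs _ hτ
    have hbmem : b ∈ {b | b ∈ s ∧ ∀ c < α, enum1 s c < b} :=
      ⟨hbs, fun c hc =>
        lt_of_le_of_lt (Ordinal.le_iSup (fun c : Iio α => enum1 s c.1) ⟨c, hc⟩) hτb⟩
    have hne : {b | b ∈ s ∧ ∀ c < α, enum1 s c < b}.Nonempty := ⟨b, hbmem⟩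
    have hmem : enum1 s α ∈ {b | b ∈ s ∧ ∀ c < α, enum1 s c < b} := by
      rw [enum1_def]; exact csInf_mem hne
    have hle : enum1 s α ≤ b := by rw [enum1_def]; exact csInf_le' hbmem
    exact ⟨⟨hmem.1, lt_of_le_of_lt hle hbO⟩, hmem.2⟩

lemma enum1_mem {s : Set Ordinal.{u}} (hs : Unb s) {α : Ordinal.{u}} (hα : α < Om.{u}) :
    enum1 s α ∈ s := ((enum1_spec hs α hα).1).1

lemma enum1_lt_Om {s : Set Ordinal.{u}} (hs : Unb s) {α : Ordinal.{u}} (hα : α < Om.{u}) :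
    enum1 s α < Om.{u} := ((enum1_spec hs α hα).1).2

lemma enum1_strictMono {s : Set Ordinal.{u}} (hs : Unb s) {α β : Ordinal.{u}}
    (h : α < β) (hβ : β < Om.{u}) : enum1 s α < enum1 s β :=
  (enum1_spec hs β hβ).2 α h


lemma om_isLimit : (Om.{u}).IsLimit :=
  ⟨(Cardinal.isSuccLimit_ord (Cardinal.aleph0_le_aleph 1)).ne_bot,
    fun _ ha => (Cardinal.isSuccLimit_ord (Cardinal.aleph0_le_aleph 1)).succ_lt ha⟩

lemma succ_lt_Om {b : Ordinal.{u}} (h : b < Om.{u}) : b + 1 < Om.{u} := by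
  rw [Ordinal.add_one_eq_succ]
  exact om_isLimit.succ_lt h

/-- Neumer-style lemma: a regressive function on limit ordinals below `ω₁` is
bounded on an unbounded set. -/
lemma neumer (B : Ordinal.{u} → Ordinal.{u})
    (hB : ∀ δ, δ.IsLimit → δ < Om.{u} → B δ < δ) :
    ∃ b < Om.{u}, Unb {δ | δ.IsLimit ∧ B δ ≤ b} := by
  by_contra hcon
  push_neg at hcon
  have hF : ∀ b : Ordinal.{u}, b < Om.{u} →
      ∃ F < Om.{u}, ∀ δ, δ.IsLimit → B δ ≤ b → δ < Om.{u} → δ ≤ F := by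
    intro b hb
    obtain ⟨F, hF1, hF2⟩ := not_unb (hcon b hb)
    exact ⟨F, hF1, fun δ h1 h2 h3 => hF2 δ ⟨h1, h2⟩ h3⟩
  classical
  set F : Ordinal.{u} → Ordinal.{u} := fun b =>
    if hb : b < Om.{u} then Classical.choose (hF b hb) else 0 with hFdef
  have hFlt : ∀ b, b < Om.{u} → F b < Om.{u} := by
    intro b hb
    simp only [hFdef, dif_pos hb]
    exact (Classical.choose_spec (hF b hb)).1
  have hFbd : ∀ b, b < Om.{u} → ∀ δ, δ.IsLimit → B δ ≤ b → δ < Om.{u} → δ ≤ F b := by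
    intro b hb
    simp only [hFdef, dif_pos hb]
    exact (Classical.choose_spec (hF b hb)).2
  set c : ℕ → Ordinal.{u} := fun n => Nat.rec 0 (fun _ x => max (F x) x + 1) n with hcdef
  have hcsucc : ∀ n, c (n + 1) = max (F (c n)) (c n) + 1 := fun n => rfl
  have hcO : ∀ n, c n < Om.{u} := by
    intro n
    induction n with
    | zero => exact om_isLimit.pos
    | succ n ih =>
      rw [hcsucc]
      exact succ_lt_Om (max_lt (hFlt _ ih) ih)
  have hcmono : ∀ n, c n < c (n + 1) := by
    intro n
    rw [hcsucc]
    exact lt_of_le_of_lt (le_max_right _ _) (lt_add_one_iff.2 le_rfl)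
  set δ : Ordinal.{u} := ⨆ n, c n with hδdef
  have hδO : δ < Om.{u} := sup_lt_Om_nat c hcO
  have hcle : ∀ n, c n ≤ δ := fun n => Ordinal.le_iSup c n
  have hlt : ∀ b, b < δ → ∃ n, b < c n := fun b hb => Ordinal.lt_iSup_iff.1 hb
  have hδlim : δ.IsLimit := by
    constructor
    · intro h0
      have := lt_of_lt_of_le (hcmono 0) (hcle 1)
      rw [h0] at this
      exact absurd this not_lt_zero
    · intro a ha
      obtain ⟨n, hn⟩ := hlt a ha
      have : succ a ≤ c n := Order.succ_le_of_lt hn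
      exact lt_of_le_of_lt this (lt_of_lt_of_le (hcmono n) (hcle (n + 1)))
  have hBδ : B δ < δ := hB δ hδlim hδO
  obtain ⟨n, hn⟩ := hlt _ hBδ
  have h1 : δ ≤ F (c n) := hFbd _ (hcO n) δ hδlim hn.le hδO
  have h2 : F (c n) < c (n + 1) := by
    rw [hcsucc]
    exact lt_of_le_of_lt (le_max_left _ _) (lt_add_one_iff.2 le_rfl)
  exact absurd ((h1.trans_lt h2).trans_le (hcle (n+1))) (lt_irrefl δ)


/-- Pruning: every ordinal-valued function on `ω₁` is constant or strictly
increasing on an `ω₁`-reindexing. -/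
lemma prune (v : Ordinal.{u} → Ordinal.{u}) :
    ∃ e : Ordinal.{u} → Ordinal.{u},
      (∀ α, α < Om.{u} → e α < Om.{u}) ∧
      (∀ α β, α < β → β < Om.{u} → e α < e β) ∧
      ((∀ α, α < Om.{u} → ∀ β, β < Om.{u} → v (e α) = v (e β)) ∨
       (∀ α β, α < β → β < Om.{u} → v (e α) < v (e β))) := by
  classical
  set w : Ordinal.{u} → Ordinal.{u} := fun α => sInf (v '' {β | α ≤ β ∧ β < Om.{u}})
    with hwdef
  have hne : ∀ α, α < Om.{u} → (v '' {β | α ≤ β ∧ β < Om.{u}}).Nonempty := by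
    intro α hα
    exact ⟨v α, ⟨α, ⟨le_rfl, hα⟩, rfl⟩⟩
  have hattain : ∀ α, α < Om.{u} → ∃ β, α ≤ β ∧ β < Om.{u} ∧ v β = w α := by
    intro α hα
    obtain ⟨β, hβ, hvβ⟩ := csInf_mem (hne α hα)
    exact ⟨β, hβ.1, hβ.2, hvβ⟩
  have hwle : ∀ α β, α ≤ β → β < Om.{u} → v β = w α → True := fun _ _ _ _ _ => trivial
  have hwmono : ∀ α α', α ≤ α' → α' < Om.{u} → w α ≤ w α' := by
    intro α α' h hα'
    apply csInf_le_csInf (OrderBot.bddBelow _) (hne α' hα')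
    exact Set.image_mono fun β hβ => ⟨h.trans hβ.1, hβ.2⟩
  have hwlb : ∀ α β, α ≤ β → β < Om.{u} → w α ≤ v β := by
    intro α β h hβ
    exact csInf_le' ⟨β, ⟨h, hβ⟩, rfl⟩
  by_cases hA : ∃ α₀, α₀ < Om.{u} ∧ ∀ α, α₀ ≤ α → α < Om.{u} → w α = w α₀
  · -- constant case
    obtain ⟨α₀, hα₀, hconst⟩ := hA
    set s : Set Ordinal.{u} := {β | β < Om.{u} ∧ v β = w α₀} with hsdef
    have hsU : Unb s := by
      intro b hb
      set α : Ordinal.{u} := max α₀ (b + 1) with hαdef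
      have hαO : α < Om.{u} := max_lt hα₀ (succ_lt_Om hb)
      obtain ⟨β, hαβ, hβO, hvβ⟩ := hattain α hαO
      refine ⟨β, ⟨hβO, ?_⟩, ?_, hβO⟩
      · rw [hvβ, hconst α (le_max_left _ _) hαO]
      · calc b < b + 1 := lt_add_one_iff.2 le_rfl
          _ ≤ α := le_max_right _ _
          _ ≤ β := hαβ
    refine ⟨enum1 s, fun α hα => enum1_lt_Om hsU hα,
      fun α β h hβ => enum1_strictMono hsU h hβ, Or.inl ?_⟩
    intro α hα β hβ
    have h1 := (enum1_mem hsU hα).2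
    have h2 := (enum1_mem hsU hβ).2
    rw [h1, h2]
  · -- increasing case
    push_neg at hA
    have hgrow : ∀ α₀, α₀ < Om.{u} → ∃ α, α₀ ≤ α ∧ α < Om.{u} ∧ w α₀ < w α := by
      intro α₀ hα₀
      obtain ⟨α, h1, h2, h3⟩ := hA α₀ hα₀
      exact ⟨α, h1, h2, lt_of_le_of_ne (hwmono _ _ h1 h2) (Ne.symm h3)⟩
    set T : Set Ordinal.{u} := {α | α < Om.{u} ∧ ∀ β, β < α → w β < w α} with hTdef
    have hTU : Unb T := by
      intro b hb
      obtain ⟨α', hbα', hα'O, hwα'⟩ := hgrow b hb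
      set A : Set Ordinal.{u} := {α | α < Om.{u} ∧ w b < w α} with hAdef
      have hAne : A.Nonempty := ⟨α', hα'O, hwα'⟩
      set α₁ : Ordinal.{u} := sInf A with hα₁def
      have hα₁A : α₁ ∈ A := csInf_mem hAne
      have hbα₁ : b < α₁ := by
        by_contra hle
        push_neg at hle
        exact absurd (hwmono _ _ hle hb) (not_le.2 hα₁A.2)
      refine ⟨α₁, ⟨hα₁A.1, ?_⟩, hbα₁, hα₁A.1⟩
      intro β hβ
      rcases le_or_gt β b with hc | hc
      · exact lt_of_le_of_lt (hwmono _ _ hc hb) hα₁A.2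
      · have hβA : β ∉ A := fun hmem => absurd hβ (not_lt.2 (csInf_le (OrderBot.bddBelow _) hmem))
        have hβO : β < Om.{u} := hβ.trans hα₁A.1
        have : ¬ w b < w β := fun hcon => hβA ⟨hβO, hcon⟩
        exact lt_of_le_of_lt (not_lt.1 this) hα₁A.2
    set bf : Ordinal.{u} → Ordinal.{u} := fun α =>
      if hα : α < Om.{u} then Classical.choose (hattain α hα) else 0 with hbfdef
    have hbf : ∀ α, α < Om.{u} → α ≤ bf α ∧ bf α < Om.{u} ∧ v (bf α) = w α := by
      intro α hα
      simp only [hbfdef, dif_pos hα]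
      obtain ⟨h1, h2, h3⟩ := Classical.choose_spec (hattain α hα)
      exact ⟨h1, h2, h3⟩
    refine ⟨fun ι => bf (enum1 T ι), ?_, ?_, Or.inr ?_⟩
    · intro α hα
      exact (hbf _ (enum1_lt_Om hTU hα)).2.1
    all_goals {
      intro ι ι' h hι'
      have hι : ι < Om.{u} := h.trans hι'
      set t := enum1 T ι
      set t' := enum1 T ι'
      have htO : t < Om.{u} := enum1_lt_Om hTU hι
      have ht'O : t' < Om.{u} := enum1_lt_Om hTU hι'
      have htt' : t < t' := enum1_strictMono hTU h hι'
      have ht'T : t' ∈ T := enum1_mem hTU hι'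
      have hwt : w t < w t' := ht'T.2 t htt'
      have h1 := hbf t htO
      have h2 := hbf t' ht'O
      have hlt : bf t < t' := by
        by_contra hge
        push_neg at hge
        have := hwlb t' (bf t) hge h1.2.1
        rw [h1.2.2] at this
        exact absurd hwt (not_lt.2 this)
      first
      | exact lt_of_lt_of_le hlt h2.1
      | { rw [h1.2.2, h2.2.2]; exact hwt }
    }


universe v

/-- Δ-system lemma for `ω₁`-indexed families of finite sets. -/
lemma delta_system {Ξ : Type v} [DecidableEq Ξ] (n : ℕ) :
    ∀ E : Ordinal.{u} → Finset Ξ, (∀ α, α < Om.{u} → (E α).card ≤ n) →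
    ∃ e : Ordinal.{u} → Ordinal.{u},
      (∀ α, α < Om.{u} → e α < Om.{u}) ∧
      (∀ α β, α < β → β < Om.{u} → e α < e β) ∧
      ∃ R : Finset Ξ,
        ∀ α β, α < Om.{u} → β < Om.{u} → α ≠ β → E (e α) ∩ E (e β) = R := by
  classical
  induction n with
  | zero =>
    intro E hE
    refine ⟨id, fun α hα => hα, fun α β h _ => h, ∅, ?_⟩
    intro α β hα hβ hne
    have h1 : E α = ∅ := Finset.card_eq_zero.1 (Nat.le_zero.1 (hE α hα))
    rw [id, id, h1, Finset.empty_inter]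
  | succ n IH =>
    intro E hE
    by_cases hc : ∃ c : Ξ, Unb {α | c ∈ E α}
    · obtain ⟨c, hcU⟩ := hc
      set e₁ : Ordinal.{u} → Ordinal.{u} := enum1 {α | c ∈ E α} with he₁def
      have he₁mem : ∀ α, α < Om.{u} → c ∈ E (e₁ α) := fun α hα => enum1_mem hcU hα
      set E' : Ordinal.{u} → Finset Ξ := fun α => (E (e₁ α)).erase c with hE'def
      have hE' : ∀ α, α < Om.{u} → (E' α).card ≤ n := by
        intro α hα
        have h1 : (E' α).card = (E (e₁ α)).card - 1 :=
          Finset.card_erase_of_mem (he₁mem α hα)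
        have h2 := hE (e₁ α) (enum1_lt_Om hcU hα)
        omega
      obtain ⟨e₂, h1, h2, R', hR'⟩ := IH E' hE'
      refine ⟨fun α => e₁ (e₂ α), ?_, ?_, insert c R', ?_⟩
      · intro α hα
        exact enum1_lt_Om hcU (h1 α hα)
      · intro α β h hβ
        exact enum1_strictMono hcU (h2 α β h hβ) (h1 β hβ)
      · intro α β hα hβ hne
        have ha : E (e₁ (e₂ α)) = insert c (E' (e₂ α)) :=
          (Finset.insert_erase (he₁mem _ (h1 α hα))).symm
        have hb : E (e₁ (e₂ β)) = insert c (E' (e₂ β)) :=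
          (Finset.insert_erase (he₁mem _ (h1 β hβ))).symm
        rw [ha, hb, ← hR' α β hα hβ hne]
        ext x
        simp only [Finset.mem_inter, Finset.mem_insert]
        tauto
    · push_neg at hc
      have hm : ∀ c : Ξ, ∃ b < Om.{u}, ∀ α, c ∈ E α → α < Om.{u} → α ≤ b := by
        intro c
        obtain ⟨b, hb1, hb2⟩ := not_unb (hc c)
        exact ⟨b, hb1, fun α h1 h2 => hb2 α h1 h2⟩
      set m : Ξ → Ordinal.{u} := fun c => Classical.choose (hm c) with hmdef
      have hm1 : ∀ c, m c < Om.{u} := fun c => (Classical.choose_spec (hm c)).1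
      have hm2 : ∀ c α, c ∈ E α → α < Om.{u} → α ≤ m c :=
        fun c α h1 h2 => (Classical.choose_spec (hm c)).2 α h1 h2
      set M : Ordinal.{u} → Ordinal.{u} := fun α => (E α).sup (fun c => m c + 1) with hMdef
      have hMlt : ∀ α, M α < Om.{u} := by
        intro α
        apply Finset.sup_lt_iff (om_isLimit.pos) |>.2
        intro c _
        exact succ_lt_Om (hm1 c)
      have hMbd : ∀ α β c, c ∈ E α → c ∈ E β → β < Om.{u} → β < M α := by
        intro α β c hcα hcβ hβ
        calc β ≤ m c := hm2 c β hcβ hβ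
          _ < m c + 1 := lt_add_one_iff.2 le_rfl
          _ ≤ M α := Finset.le_sup (f := fun c => m c + 1) hcα
      set N : Ordinal.{u} → Ordinal.{u} := fun α => ⨆ β : Iio (α + 1), M β.1 with hNdef
      have hNlt : ∀ α, α < Om.{u} → N α < Om.{u} :=
        fun α hα => bsup_lt_Om (succ_lt_Om hα) _ fun c => hMlt _
      have hNle : ∀ β α, β ≤ α → M β ≤ N α := by
        intro β α h
        exact Ordinal.le_iSup (fun β : Iio (α + 1) => M β.1)
          ⟨β, lt_of_le_of_lt h (lt_add_one_iff.2 le_rfl)⟩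
      have hNmono : ∀ β α, β ≤ α → N β ≤ N α := by
        intro β α h
        apply Ordinal.iSup_le
        intro x
        exact hNle x.1 α (le_trans (lt_add_one_iff.1 x.2) h)
      set K : Set Ordinal.{u} := {a | a < Om.{u} ∧ ∀ β, β < a → N β < a} with hKdef
      have hKU : Unb K := by
        intro b hb
        set c : ℕ → Ordinal.{u} :=
          fun k => Nat.rec (b + 1) (fun _ x => max (N x) x + 1) k with hcdef
        have hc0 : c 0 = b + 1 := rfl
        have hcs : ∀ k, c (k + 1) = max (N (c k)) (c k) + 1 := fun k => rfl
        have hcO : ∀ k, c k < Om.{u} := by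
          intro k
          induction k with
          | zero => exact succ_lt_Om hb
          | succ k ih =>
            rw [hcs]
            exact succ_lt_Om (max_lt (hNlt _ ih) ih)
        have hcmono : ∀ k, c k < c (k + 1) := by
          intro k
          rw [hcs]
          exact lt_of_le_of_lt (le_max_right _ _) (lt_add_one_iff.2 le_rfl)
        set a : Ordinal.{u} := ⨆ k, c k with hadef
        have haO : a < Om.{u} := sup_lt_Om_nat c hcO
        have hcle : ∀ k, c k ≤ a := fun k => Ordinal.le_iSup c k
        refine ⟨a, ⟨haO, ?_⟩, ?_, haO⟩
        · intro β hβ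
          obtain ⟨k, hk⟩ := Ordinal.lt_iSup_iff.1 hβ
          calc N β ≤ N (c k) := hNmono β (c k) hk.le
            _ < max (N (c k)) (c k) + 1 :=
              lt_of_le_of_lt (le_max_left _ _) (lt_add_one_iff.2 le_rfl)
            _ = c (k + 1) := (hcs k).symm
            _ ≤ a := hcle (k + 1)
        · calc b < b + 1 := lt_add_one_iff.2 le_rfl
            _ = c 0 := rfl
            _ ≤ a := hcle 0
      refine ⟨enum1 K, fun α hα => enum1_lt_Om hKU hα,
        fun α β h hβ => enum1_strictMono hKU h hβ, ∅, ?_⟩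
      have key : ∀ α β, α < Om.{u} → β < Om.{u} → α < β →
          E (enum1 K α) ∩ E (enum1 K β) = ∅ := by
        intro α β hα hβ hab
        by_contra hne
        obtain ⟨x, hx⟩ := Finset.nonempty_iff_ne_empty.2 hne
        rw [Finset.mem_inter] at hx
        have h1 : enum1 K α < enum1 K β := enum1_strictMono hKU hab hβ
        have h2 : enum1 K β ∈ K := enum1_mem hKU hβ
        have h3 : N (enum1 K α) < enum1 K β := h2.2 _ h1
        have h4 : enum1 K β < M (enum1 K α) :=
          hMbd _ _ x hx.1 hx.2 (enum1_lt_Om hKU hβ)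
        have h5 : M (enum1 K α) ≤ N (enum1 K α) := hNle _ _ le_rfl
        exact absurd ((h4.trans_le h5).trans h3) (lt_irrefl _)
      intro α β hα hβ hne
      rcases lt_or_gt_of_ne hne with h | h
      · exact key α β hα hβ h
      · rw [Finset.inter_comm]
        exact key β α hβ hα h


/-- Endgame: an injective real-valued function on `ω₁` cannot have left limits at
all limit ordinals. -/
lemma endgame (g h : Ordinal.{u} → ℝ)
    (hconv : ∀ δ, δ.IsLimit → δ < Om.{u} → ∀ ε : ℝ, 0 < ε →
      ∃ β < δ, ∀ α, β < α → α < δ → |g α - h δ| < ε)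
    (hinj : ∀ α β, α < Om.{u} → β < Om.{u} → α ≠ β → g α ≠ g β) : False := by
  classical
  have key : ∀ ε : ℝ, 0 < ε → ∃ b < Om.{u}, ∃ t : ℝ,
      ∀ α, b < α → α < Om.{u} → |g α - t| < 3 * ε := by
    intro ε hε
    set B : Ordinal.{u} → Ordinal.{u} := fun δ =>
      if hd : δ.IsLimit ∧ δ < Om.{u} then Classical.choose (hconv δ hd.1 hd.2 ε hε) else 0
      with hBdef
    have hBsp : ∀ δ, δ.IsLimit → δ < Om.{u} →
        B δ < δ ∧ ∀ α, B δ < α → α < δ → |g α - h δ| < ε := by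
      intro δ h1 h2
      have hd : δ.IsLimit ∧ δ < Om.{u} := ⟨h1, h2⟩
      simp only [hBdef, dif_pos hd]
      obtain ⟨ha, hb⟩ := Classical.choose_spec (hconv δ hd.1 hd.2 ε hε)
      exact ⟨ha, hb⟩
    obtain ⟨b, hbO, hT⟩ := neumer B (fun δ h1 h2 => (hBsp δ h1 h2).1)
    -- pick δ̄ ∈ T with δ̄ > b
    obtain ⟨δ₀, hδ₀T, hbδ₀, hδ₀O⟩ := hT b hbO
    refine ⟨b, hbO, h δ₀, ?_⟩
    intro α hbα hαO
    obtain ⟨δ, hδT, hδgt, hδO⟩ := hT (max α δ₀) (max_lt hαO hδ₀O)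
    have hαδ : α < δ := (le_max_left _ _).trans_lt hδgt
    have hδ₀δ : δ₀ < δ := (le_max_right _ _).trans_lt hδgt
    have hsp := (hBsp δ hδT.1 hδO).2
    have hsp₀ := (hBsp δ₀ hδ₀T.1 hδ₀O).2
    have h1 : |g α - h δ| < ε := hsp α (lt_of_le_of_lt hδT.2 hbα) hαδ
    -- bridge point b+1
    have hb1δ₀ : b + 1 < δ₀ := by
      rw [Ordinal.add_one_eq_succ]
      exact hδ₀T.1.succ_lt hbδ₀
    have hbb1 : b < b + 1 := lt_add_one_iff.2 le_rfl
    have h2 : |g (b + 1) - h δ₀| < ε := hsp₀ _ (lt_of_le_of_lt hδ₀T.2 hbb1) hb1δ₀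
    have h3 : |g (b + 1) - h δ| < ε := hsp _ (lt_of_le_of_lt hδT.2 hbb1) (hb1δ₀.trans hδ₀δ)
    calc |g α - h δ₀| = |(g α - h δ) - (g (b+1) - h δ) + (g (b+1) - h δ₀)| := by ring_nf
      _ ≤ |(g α - h δ) - (g (b+1) - h δ)| + |g (b+1) - h δ₀| := abs_add_le _ _
      _ ≤ |g α - h δ| + |g (b+1) - h δ| + |g (b+1) - h δ₀| := by
          have := abs_sub (g α - h δ) (g (b+1) - h δ)
          linarith [abs_sub_abs_le_abs_sub (g α - h δ) (g (b+1) - h δ),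
            abs_sub (g α - h δ) (g (b+1) - h δ)]
      _ < 3 * ε := by linarith
  -- instantiate with ε = 1/(n+1)
  have hkn : ∀ n : ℕ, ∃ b < Om.{u}, ∃ t : ℝ,
      ∀ α, b < α → α < Om.{u} → |g α - t| < 3 * (1 / (n + 1)) := by
    intro n
    apply key
    positivity
  set bf : ℕ → Ordinal.{u} := fun n => Classical.choose (hkn n) with hbfdef
  have hbf : ∀ n, bf n < Om.{u} ∧ ∃ t : ℝ,
      ∀ α, bf n < α → α < Om.{u} → |g α - t| < 3 * (1 / (n + 1)) :=
    fun n => ⟨(Classical.choose_spec (hkn n)).1, (Classical.choose_spec (hkn n)).2⟩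
  set b : Ordinal.{u} := ⨆ n, bf n with hbdef
  have hbO : b < Om.{u} := sup_lt_Om_nat bf fun n => (hbf n).1
  set α₁ : Ordinal.{u} := b + 1 with hα₁def
  set α₂ : Ordinal.{u} := b + 2 with hα₂def
  have hα₁O : α₁ < Om.{u} := succ_lt_Om hbO
  have hα₂O : α₂ < Om.{u} := by
    have : b + 2 = (b + 1) + 1 := by rw [add_assoc]; norm_num
    rw [hα₂def, this]
    exact succ_lt_Om hα₁O
  have hα₁₂ : α₁ < α₂ := by
    rw [hα₁def, hα₂def]
    apply add_lt_add_right
    norm_num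
  have hsmall : ∀ n : ℕ, |g α₁ - g α₂| < 6 * (1 / (n + 1)) := by
    intro n
    obtain ⟨t, ht⟩ := (hbf n).2
    have hb1 : bf n ≤ b := Ordinal.le_iSup bf n
    have h1 : |g α₁ - t| < 3 * (1 / (n + 1)) :=
      ht α₁ (lt_of_le_of_lt hb1 (lt_add_one_iff.2 le_rfl)) hα₁O
    have h2 : |g α₂ - t| < 3 * (1 / (n + 1)) := by
      apply ht α₂ _ hα₂O
      calc bf n ≤ b := hb1
        _ < b + 1 := lt_add_one_iff.2 le_rfl
        _ < b + 2 := hα₁₂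
    calc |g α₁ - g α₂| = |(g α₁ - t) - (g α₂ - t)| := by ring_nf
      _ ≤ |g α₁ - t| + |g α₂ - t| := abs_sub _ _
      _ < 6 * (1 / (n + 1)) := by linarith
  have heq : g α₁ = g α₂ := by
    by_contra hne
    have habs : 0 < |g α₁ - g α₂| := abs_pos.2 (sub_ne_zero.2 hne)
    obtain ⟨n, hn⟩ := exists_nat_one_div_lt (show (0:ℝ) < |g α₁ - g α₂| / 6 by positivity)
    have := hsmall n
    have h6 : 6 * (1 / (n + 1 : ℝ)) < 6 * (|g α₁ - g α₂| / 6) := by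
      apply mul_lt_mul_of_pos_left hn
      norm_num
    rw [mul_div_cancel₀] at h6
    · linarith
    · norm_num
  exact hinj α₁ α₂ hα₁O hα₂O (ne_of_lt hα₁₂) heq


/-- From an uncountable range, pick an `ω₁`-family with pairwise distinct values. -/
lemma exists_inj_family {X : Type v} [Nonempty X] (f : X → ℝ)
    (hunc : ¬ (Set.range f).Countable) :
    ∃ x : Ordinal.{u} → X,
      ∀ α β, α < Om.{u} → β < Om.{u} → α ≠ β → f (x α) ≠ f (x β) := by
  classical
  set x : Ordinal.{u} → X := Ordinal.lt_wf.fix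
    (fun α IH =>
      if h : ∃ s : X, ∀ c, ∀ hc : c < α, f s ≠ f (IH c hc) then Classical.choose h
      else Classical.arbitrary X) with hxdef
  have hx : ∀ α : Ordinal.{u}, x α =
      if h : ∃ s : X, ∀ c, ∀ hc : c < α, f s ≠ f (x c) then Classical.choose h
      else Classical.arbitrary X := by
    intro α
    rw [hxdef, WellFounded.fix_eq]
  have hkey : ∀ α, α < Om.{u} → ∀ c, c < α → f (x α) ≠ f (x c) := by
    intro α hα
    have hcnt : Countable (Iio α) := countable_Iio hα
    have hprev : (Set.range fun c : Iio α => f (x c.1)).Countable :=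
      Set.countable_range _
    have hex : ∃ s : X, ∀ c, ∀ hc : c < α, f s ≠ f (x c) := by
      by_contra hno
      push_neg at hno
      apply hunc
      apply Set.Countable.mono _ hprev
      rintro r ⟨s, rfl⟩
      obtain ⟨c, hc, hfc⟩ := hno s
      exact ⟨⟨c, hc⟩, hfc.symm⟩
    intro c hc
    rw [hx α]
    rw [dif_pos hex]
    exact Classical.choose_spec hex c hc
  refine ⟨x, fun α β hα hβ hne => ?_⟩
  rcases lt_or_gt_of_ne hne with h | h
  · exact (hkey β hβ α h).symm
  · exact hkey α hα β h


/-- Iterated pruning over a finite set of coordinates. -/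
lemma prune_finset {Ξ : Type v} (R : Finset Ξ) (v : Ξ → Ordinal.{u} → Ordinal.{u}) :
    ∃ e : Ordinal.{u} → Ordinal.{u},
      (∀ α, α < Om.{u} → e α < Om.{u}) ∧
      (∀ α β, α < β → β < Om.{u} → e α < e β) ∧
      ∀ ξ ∈ R,
        ((∀ α, α < Om.{u} → ∀ β, β < Om.{u} → v ξ (e α) = v ξ (e β)) ∨
         (∀ α β, α < β → β < Om.{u} → v ξ (e α) < v ξ (e β))) := by
  classical
  induction R using Finset.induction with
  | empty => exact ⟨id, fun α hα => hα, fun α β h _ => h, fun ξ hξ => absurd hξ (by simp)⟩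
  | @insert ζ Rs ha ih =>
    obtain ⟨e₁, h1O, h1m, h1d⟩ := ih
    obtain ⟨e₂, h2O, h2m, h2d⟩ := prune (fun α => v ζ (e₁ α))
    refine ⟨fun α => e₁ (e₂ α), fun α hα => h1O _ (h2O α hα), ?_, ?_⟩
    · intro α β h hβ
      exact h1m _ _ (h2m α β h hβ) (h2O β hβ)
    · intro ξ hξ
      rcases Finset.mem_insert.1 hξ with rfl | hmem
      · exact h2d
      · rcases h1d ξ hmem with hconst | hincr
        · exact Or.inl fun α hα β hβ => hconst _ (h2O α hα) _ (h2O β hβ)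
        · exact Or.inr fun α β h hβ => hincr _ _ (h2m α β h hβ) (h2O β hβ)

section Core

variable {Ξ : Type v}

/-- The σ-product of the spaces `Iio (γ ξ)` based at `0`. -/
abbrev SProd (γ : Ξ → Ordinal.{u}) : Set (Π ξ : Ξ, ↥(Set.Iio (γ ξ))) :=
  {x : Π ξ : Ξ, ↥(Set.Iio (γ ξ)) | {ξ | (x ξ : Ordinal) ≠ 0}.Finite}

variable (γ : Ξ → Ordinal.{u})

/-- The core contradiction. -/
lemma core (hγ : ∀ ξ, γ ξ ≠ 0)
    (f : ↥(SProd γ) → ℝ) (hf : Continuous f)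
    (x : Ordinal.{u} → ↥(SProd γ))
    (R : Finset Ξ)
    (hdisj : ∀ ξ, ξ ∉ R → ∀ α β, α < Om.{u} → β < Om.{u} → α ≠ β →
      ¬((((x α).1 ξ : Ordinal) ≠ 0) ∧ (((x β).1 ξ : Ordinal) ≠ 0)))
    (hdich : ∀ ξ ∈ R,
      (∀ α, α < Om.{u} → ∀ β, β < Om.{u} → ((x α).1 ξ : Ordinal) = ((x β).1 ξ : Ordinal)) ∨
      (∀ α β, α < β → β < Om.{u} → ((x α).1 ξ : Ordinal) < ((x β).1 ξ : Ordinal)))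
    (hinj : ∀ α β, α < Om.{u} → β < Om.{u} → α ≠ β → f (x α) ≠ f (x β)) : False := by
  classical
  -- the limit points
  have hbound : ∀ δ, δ.IsLimit → δ < Om.{u} → ∀ ξ ∈ R,
      (⨆ α : Iio δ, ((x α.1).1 ξ : Ordinal)) < γ ξ := by
    intro δ hδ hδO ξ hξ
    have hle : (⨆ α : Iio δ, ((x α.1).1 ξ : Ordinal)) ≤ ((x δ).1 ξ : Ordinal) := by
      apply Ordinal.iSup_le
      intro α
      rcases hdich ξ hξ with hconst | hincr
      · exact (hconst α.1 (α.2.trans hδO) δ hδO).le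
      · exact (hincr α.1 δ α.2 hδO).le
    exact lt_of_le_of_lt hle ((x δ).1 ξ).2
  have hypt : ∀ δ, δ.IsLimit → δ < Om.{u} → ∃ y : ↥(SProd γ),
      (∀ ξ ∈ R, ((y.1 ξ : Ordinal) = ⨆ α : Iio δ, ((x α.1).1 ξ : Ordinal))) ∧
      (∀ ξ, ξ ∉ R → (y.1 ξ : Ordinal) = 0) := by
    intro δ hd hdO
    refine ⟨⟨fun ξ => if hξ : ξ ∈ R then
        ⟨⨆ α : Iio δ, ((x α.1).1 ξ : Ordinal), hbound δ hd hdO ξ hξ⟩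
      else ⟨0, pos_iff_ne_zero.2 (hγ ξ)⟩, ?_⟩, ?_, ?_⟩
    · apply Set.Finite.subset R.finite_toSet
      intro ξ hξ
      simp only [Set.mem_setOf_eq] at hξ
      by_contra hmem
      have hmem' : ξ ∉ R := fun h => hmem (Finset.mem_coe.2 h)
      rw [dif_neg hmem'] at hξ
      exact hξ rfl
    · intro ξ hξ
      simp only [dif_pos hξ]
    · intro ξ hξ
      simp only [dif_neg hξ]
  set Y : Ordinal.{u} → ↥(SProd γ) := fun δ =>
    if hd : δ.IsLimit ∧ δ < Om.{u} then Classical.choose (hypt δ hd.1 hd.2) else x 0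
    with hYdef
  apply endgame (fun α => f (x α)) (fun δ => f (Y δ)) ?_
    (fun α β hα hβ hne => hinj α β hα hβ hne)
  intro δ hdlim hdO ε hε
  have hd : δ.IsLimit ∧ δ < Om.{u} := ⟨hdlim, hdO⟩
  have hYd : Y δ = Classical.choose (hypt δ hdlim hdO) := by
    rw [hYdef]; exact dif_pos hd
  have hyR : ∀ ξ ∈ R, (((Y δ).1 ξ : Ordinal) = ⨆ α : Iio δ, ((x α.1).1 ξ : Ordinal)) := by
    rw [hYd]; exact (Classical.choose_spec (hypt δ hdlim hdO)).1
  have hyNR : ∀ ξ, ξ ∉ R → (((Y δ).1 ξ : Ordinal) = 0) := by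
    rw [hYd]; exact (Classical.choose_spec (hypt δ hdlim hdO)).2
  -- the ball preimage is a neighborhood of `Y δ`
  have hU : f ⁻¹' (Metric.ball (f (Y δ)) ε) ∈ nhds (Y δ) := by
    apply (Metric.isOpen_ball.preimage hf).mem_nhds
    simp [Metric.mem_ball, hε]
  rw [mem_nhds_subtype] at hU
  obtain ⟨P, hP, hPsub⟩ := hU
  rw [nhds_pi, Filter.mem_pi] at hP
  obtain ⟨I, hIfin, t, ht, hIsub⟩ := hP
  -- coordinatewise tail bounds
  have hco : ∀ ξ : Ξ, ∃ β, β < δ ∧ ∀ α, β < α → α < δ → (x α).1 ξ ∈ t ξ := by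
    intro ξ
    by_cases hξR : ξ ∈ R
    · rcases hdich ξ hξR with hconst | hincr
      · -- constant coordinate
        refine ⟨0, hdlim.pos, ?_⟩
        intro α h0α hαδ
        have hval : ((x α).1 ξ : Ordinal) = ((Y δ).1 ξ : Ordinal) := by
          rw [hyR ξ hξR]
          apply le_antisymm
          · exact Ordinal.le_iSup (fun α : Iio δ => ((x α.1).1 ξ : Ordinal)) ⟨α, hαδ⟩
          · apply Ordinal.iSup_le
            intro β
            exact (hconst β.1 (β.2.trans hdO) α (hαδ.trans hdO)).le
        have heq : (x α).1 ξ = (Y δ).1 ξ := Subtype.ext hval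
        rw [heq]
        exact mem_of_mem_nhds (ht ξ)
      · -- increasing coordinate
        have hyv : ((Y δ).1 ξ : Ordinal) = ⨆ α : Iio δ, ((x α.1).1 ξ : Ordinal) :=
          hyR ξ hξR
        have hlt : ∀ α, α < δ →
            ((x α).1 ξ : Ordinal) < ⨆ α : Iio δ, ((x α.1).1 ξ : Ordinal) := by
          intro α hαδ
          have hsucc : α + 1 < δ := by
            rw [Ordinal.add_one_eq_succ]; exact hdlim.succ_lt hαδ
          calc ((x α).1 ξ : Ordinal) < ((x (α+1)).1 ξ : Ordinal) :=
                hincr α (α+1) (lt_add_one_iff.2 le_rfl) (hsucc.trans hdO)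
            _ ≤ _ := Ordinal.le_iSup (fun α : Iio δ => ((x α.1).1 ξ : Ordinal)) ⟨α+1, hsucc⟩
        have hle : ∀ α, α < δ →
            ((x α).1 ξ : Ordinal) ≤ ⨆ α : Iio δ, ((x α.1).1 ξ : Ordinal) :=
          fun α h => (hlt α h).le
        have hsv0 : ((Y δ).1 ξ : Ordinal) ≠ 0 := by
          intro h0
          have h1 := hlt 0 hdlim.pos
          rw [← hyv, h0] at h1
          exact absurd h1 not_lt_zero
        obtain ⟨W, hW, hWsub⟩ := (mem_nhds_subtype _ _ _).1 (ht ξ)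
        obtain ⟨b, hbs, hIoc⟩ := (SuccOrder.hasBasis_nhds_Ioc_of_exists_lt ⟨0, pos_iff_ne_zero.2 hsv0⟩).mem_iff.1 hW
        have hbs' : b < ⨆ α : Iio δ, ((x α.1).1 ξ : Ordinal) := by
          rw [← hyv]; exact hbs
        obtain ⟨⟨α₀, hα₀δ⟩, hbα₀⟩ := Ordinal.lt_iSup_iff.1 hbs'
        refine ⟨α₀, hα₀δ, ?_⟩
        intro α hα₀α hαδ
        have hmem : ((x α).1 ξ : Ordinal) ∈ Set.Ioc b ((Y δ).1 ξ : Ordinal) := by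
          constructor
          · exact hbα₀.trans (hincr α₀ α hα₀α (hαδ.trans hdO))
          · rw [hyv]; exact hle α hαδ
        exact hWsub (hIoc hmem)
    · -- off-root coordinate
      have hy0 : ((Y δ).1 ξ : Ordinal) = 0 := hyNR ξ hξR
      by_cases hex : ∃ α₀, α₀ < δ ∧ ((x α₀).1 ξ : Ordinal) ≠ 0
      · obtain ⟨α₀, hα₀δ, hα₀ne⟩ := hex
        refine ⟨α₀, hα₀δ, ?_⟩
        intro α hα₀α hαδ
        have hval : ((x α).1 ξ : Ordinal) = 0 := by
          by_contra hne
          exact hdisj ξ hξR α₀ α (hα₀δ.trans hdO) (hαδ.trans hdO)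
            (ne_of_lt hα₀α) ⟨hα₀ne, hne⟩
        have heq : (x α).1 ξ = (Y δ).1 ξ := Subtype.ext (by rw [hval, hy0])
        rw [heq]; exact mem_of_mem_nhds (ht ξ)
      · push_neg at hex
        refine ⟨0, hdlim.pos, fun α h0 hαδ => ?_⟩
        have heq : (x α).1 ξ = (Y δ).1 ξ := Subtype.ext (by rw [hex α hαδ, hy0])
        rw [heq]; exact mem_of_mem_nhds (ht ξ)
  set B : Ξ → Ordinal.{u} := fun ξ => Classical.choose (hco ξ) with hBdef
  have hB : ∀ ξ, B ξ < δ ∧ ∀ α, B ξ < α → α < δ → (x α).1 ξ ∈ t ξ :=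
    fun ξ => Classical.choose_spec (hco ξ)
  set β₀ : Ordinal.{u} := hIfin.toFinset.sup B with hβ₀def
  have hβ₀δ : β₀ < δ := by
    rw [hβ₀def]
    apply Finset.sup_lt_iff hdlim.pos |>.2
    intro ξ _
    exact (hB ξ).1
  refine ⟨β₀, hβ₀δ, ?_⟩
  intro α hβα hαδ
  have hxmem : (x α).1 ∈ P := by
    apply hIsub
    intro ξ hξI
    have hle : B ξ ≤ β₀ := Finset.le_sup (hIfin.mem_toFinset.2 hξI)
    exact (hB ξ).2 α (lt_of_le_of_lt hle hβα) hαδ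
  have hball : x α ∈ f ⁻¹' (Metric.ball (f (Y δ)) ε) := hPsub hxmem
  simpa [Metric.mem_ball, Real.dist_eq] using hball

end Core

/-- Main lemma: continuous real functions on σ-products of ordinals have countable range. -/
lemma main {Ξ : Type v} (γ : Ξ → Ordinal.{u}) (hγ : ∀ ξ, γ ξ ≠ 0)
    (f : ↥(SProd γ) → ℝ) (hf : Continuous f) : (Set.range f).Countable := by
  classical
  by_contra hunc
  have hne : Nonempty ↥(SProd γ) :=
    ⟨⟨fun ξ => ⟨0, pos_iff_ne_zero.2 (hγ ξ)⟩, by simp⟩⟩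
  obtain ⟨x0, hx0⟩ := exists_inj_family.{u, max (u+1) v} (X := ↥(SProd γ)) f hunc
  set E : Ordinal.{u} → Finset Ξ := fun α => (x0 α).2.toFinset with hEdef
  have hmemE : ∀ α ξ, ξ ∈ E α ↔ ((x0 α).1 ξ : Ordinal) ≠ 0 := by
    intro α ξ
    rw [hEdef]
    exact Set.Finite.mem_toFinset _
  -- Step A : uniform bound on support sizes on an unbounded set
  have hsize : ∃ n : ℕ, Unb {α | (E α).card ≤ n} := by
    by_contra hno
    push_neg at hno
    have hb : ∀ n : ℕ, ∃ b < Om.{u}, ∀ α, (E α).card ≤ n → α < Om.{u} → α ≤ b :=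
      fun n => by
        obtain ⟨b, hb1, hb2⟩ := not_unb (hno n)
        exact ⟨b, hb1, fun α h1 h2 => hb2 α h1 h2⟩
    set bb : ℕ → Ordinal.{u} := fun n => Classical.choose (hb n) with hbbdef
    have hbb : ∀ n, bb n < Om.{u} ∧ ∀ α, (E α).card ≤ n → α < Om.{u} → α ≤ bb n :=
      fun n => ⟨(Classical.choose_spec (hb n)).1,
        fun α h1 h2 => (Classical.choose_spec (hb n)).2 α h1 h2⟩
    set b : Ordinal.{u} := ⨆ n, bb n with hbdef
    have hbO : b < Om.{u} := sup_lt_Om_nat bb fun n => (hbb n).1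
    have hα : b + 1 < Om.{u} := succ_lt_Om hbO
    have h1 : b + 1 ≤ bb ((E (b + 1)).card) := (hbb _).2 (b + 1) le_rfl hα
    have h2 : bb ((E (b + 1)).card) ≤ b := Ordinal.le_iSup bb _
    have h3 : b < b + 1 := lt_add_one_iff.2 le_rfl
    exact absurd ((h1.trans h2).trans_lt h3) (lt_irrefl _)
  obtain ⟨n, hnU⟩ := hsize
  set e₀ : Ordinal.{u} → Ordinal.{u} := enum1 {α | (E α).card ≤ n} with he₀def
  have he₀O : ∀ α, α < Om.{u} → e₀ α < Om.{u} := fun α hα => enum1_lt_Om hnU hα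
  have he₀m : ∀ α β, α < β → β < Om.{u} → e₀ α < e₀ β :=
    fun α β h hβ => enum1_strictMono hnU h hβ
  have he₀card : ∀ α, α < Om.{u} → (E (e₀ α)).card ≤ n := fun α hα => enum1_mem hnU hα
  -- Step B : Δ-system
  obtain ⟨e₁, he₁O, he₁m, R, hR⟩ :=
    delta_system n (fun α => E (e₀ α)) (fun α hα => he₀card α hα)
  -- Step C : pruning of root coordinates
  obtain ⟨e₂, he₂O, he₂m, hdich₂⟩ :=
    prune_finset R (fun ξ β => ((x0 (e₀ (e₁ β))).1 ξ : Ordinal))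
  -- composite reindexing
  set e : Ordinal.{u} → Ordinal.{u} := fun α => e₀ (e₁ (e₂ α)) with hedef
  have heO : ∀ α, α < Om.{u} → e α < Om.{u} :=
    fun α hα => he₀O _ (he₁O _ (he₂O α hα))
  have hem : ∀ α β, α < β → β < Om.{u} → e α < e β :=
    fun α β h hβ => he₀m _ _ (he₁m _ _ (he₂m α β h hβ) (he₂O β hβ)) (he₁O _ (he₂O β hβ))
  have hene : ∀ α β, α < Om.{u} → β < Om.{u} → α ≠ β → e α ≠ e β := by
    intro α β hα hβ hne
    rcases lt_or_gt_of_ne hne with h | h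
    · exact ne_of_lt (hem α β h hβ)
    · exact (ne_of_lt (hem β α h hα)).symm
  set x3 : Ordinal.{u} → ↥(SProd γ) := fun α => x0 (e α) with hx3def
  -- apply the core lemma
  apply core γ hγ f hf x3 R
  · -- disjointness off the root
    intro ξ hξR α β hα hβ hne hcontra
    have hmm : ξ ∈ E (e₀ (e₁ (e₂ α))) ∩ E (e₀ (e₁ (e₂ β))) := by
      rw [Finset.mem_inter, hmemE, hmemE]
      exact hcontra
    have hint := hR (e₂ α) (e₂ β) (he₂O α hα) (he₂O β hβ) ?_
    · rw [hint] at hmm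
      exact hξR hmm
    · intro h
      rcases lt_or_gt_of_ne hne with hlt | hlt
      · exact ne_of_lt (he₂m α β hlt hβ) h
      · exact (ne_of_lt (he₂m β α hlt hα)).symm h
  · -- dichotomy on the root
    intro ξ hξ
    rcases hdich₂ ξ hξ with hconst | hincr
    · exact Or.inl fun α hα β hβ => hconst α hα β hβ
    · exact Or.inr fun α β h hβ => hincr α β h hβ
  · -- injectivity of values
    intro α β hα hβ hne
    exact hx0 (e α) (e β) (heO α hα) (heO β hβ) (hene α β hα hβ hne)

end SigmaFC

/-- A space is functionally countable if every continuous real-valued function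
on it has countable range. -/
def FunctionallyCountable (X : Type*) [TopologicalSpace X] : Prop :=
  ∀ f : X → ℝ, Continuous f → (Set.range f).Countable

/-- Let `λ` be a cardinal and `γ_ξ` (for ordinals `ξ < λ`) be
nonzero ordinals with their order topologies.  Then the σ-product
`σ(∏_{ξ<λ} γ_ξ, 0)`, i.e. the subspace of points with finite support, is
functionally countable. -/
theorem sigmaProduct_functionallyCountable
    (lam : Cardinal) (γ : ↥(Set.Iio lam.ord) → Ordinal)
    (hγ : ∀ ξ, γ ξ ≠ 0) :
    FunctionallyCountable
      ↥{x : Π ξ : ↥(Set.Iio lam.ord), ↥(Set.Iio (γ ξ)) |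
          {ξ | (x ξ : Ordinal) ≠ 0}.Finite} := by
  intro f hf
  exact SigmaFC.main γ hγ f hf
end
end

section
/- Let n be a natural number and let γ_0, ..., γ_{n-1} be nonzero ordinals, each endowed with the order topology. Then the product space ∏_{i<n} γ_i is exponentially separable. -/
open Set Topology Filter
universe u


/-- A space `X` is exponentially separable if, for every countable family `F`
of closed subsets of `X`, there is a countable set `A ⊆ X` that is strongly
dense in `F`: `A` meets `⋂₀ G` for every subfamily `G ⊆ F` whose intersection
is nonempty. -/
def ExponentiallySeparable (X : Type*) [TopologicalSpace X] : Prop :=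
  ∀ F : Set (Set X), F.Countable → (∀ s ∈ F, IsClosed s) →
    ∃ A : Set X, A.Countable ∧ ∀ G ⊆ F, (⋂₀ G).Nonempty → (A ∩ ⋂₀ G).Nonempty

lemma ES_of_homeomorph {X Y : Type*} [TopologicalSpace X] [TopologicalSpace Y] (h : X ≃ₜ Y)
    (hX : ExponentiallySeparable X) : ExponentiallySeparable Y := by
  intro F hF hcl
  obtain ⟨A, hA, hAd⟩ := hX ((fun s => h ⁻¹' s) '' F) (hF.image _)
    (by rintro s ⟨t, ht, rfl⟩; exact (hcl t ht).preimage h.continuous)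
  refine ⟨h '' A, hA.image _, ?_⟩
  rintro G hG ⟨y, hy⟩
  obtain ⟨a, haA, ha⟩ := hAd ((fun s => h ⁻¹' s) '' G) (Set.image_mono hG)
    ⟨h.symm y, by
      intro t ht
      obtain ⟨u, hu, rfl⟩ := ht
      simp only [Set.mem_preimage, Homeomorph.apply_symm_apply]
      exact hy u hu⟩
  refine ⟨h a, Set.mem_image_of_mem _ haA, fun t ht => ?_⟩
  exact ha _ (Set.mem_image_of_mem _ ht)

lemma ES_trace {X : Type*} [TopologicalSpace X] (Y : Set X) (hY : ExponentiallySeparable Y)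
    (F : Set (Set X)) (hF : F.Countable) (hcl : ∀ s ∈ F, IsClosed s) :
    ∃ A : Set X, A.Countable ∧ ∀ G ⊆ F, (⋂₀ G ∩ Y).Nonempty → (A ∩ ⋂₀ G).Nonempty := by
  obtain ⟨A, hA, hAd⟩ := hY ((fun s => (Subtype.val ⁻¹' s : Set Y)) '' F) (hF.image _)
    (by rintro s ⟨t, ht, rfl⟩; exact (hcl t ht).preimage continuous_subtype_val)
  refine ⟨Subtype.val '' A, hA.image _, ?_⟩
  rintro G hG ⟨x, hxG, hxY⟩
  obtain ⟨a, haA, ha⟩ := hAd ((fun s => (Subtype.val ⁻¹' s : Set Y)) '' G)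
    (Set.image_mono hG)
    ⟨⟨x, hxY⟩, by
      rintro t ⟨u, hu, rfl⟩
      exact hxG u hu⟩
  exact ⟨a, Set.mem_image_of_mem _ haA, fun t ht => ha _ (Set.mem_image_of_mem _ ht)⟩

lemma ES_iUnion {X : Type*} [TopologicalSpace X] {ι : Type*} [Countable ι] (Y : ι → Set X)
    (hcov : ∀ x, ∃ k, x ∈ Y k) (hES : ∀ k, ExponentiallySeparable (Y k)) :
    ExponentiallySeparable X := by
  intro F hF hcl
  choose A hA hAd using fun k => ES_trace (Y k) (hES k) F hF hcl
  refine ⟨⋃ k, A k, Set.countable_iUnion hA, ?_⟩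
  rintro G hG ⟨x, hx⟩
  obtain ⟨k, hk⟩ := hcov x
  obtain ⟨a, h1, h2⟩ := hAd k G hG ⟨x, hx, hk⟩
  exact ⟨a, Set.mem_iUnion.2 ⟨k, h1⟩, h2⟩

noncomputable def boxHomeo {n : ℕ} (γ δ : Fin n → Ordinal.{u}) (h : ∀ i, δ i ≤ γ i) :
    ↥{x : Π i : Fin n, ↥(Set.Iio (γ i)) | ∀ i, (x i : Ordinal) < δ i} ≃ₜ
      (Π i : Fin n, ↥(Set.Iio (δ i))) where
  toFun z i := ⟨(z.1 i : Ordinal), z.2 i⟩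
  invFun y := ⟨fun i => ⟨(y i : Ordinal), lt_of_lt_of_le (y i).2 (h i)⟩, fun i => (y i).2⟩
  left_inv z := by
    apply Subtype.ext; funext i; rfl
  right_inv y := by funext i; rfl
  continuous_toFun := continuous_pi fun i =>
    Continuous.subtype_mk (continuous_subtype_val.comp
      ((continuous_apply i).comp continuous_subtype_val)) _
  continuous_invFun := Continuous.subtype_mk (continuous_pi fun i =>
    Continuous.subtype_mk (continuous_subtype_val.comp (continuous_apply i)) _) _

noncomputable def sliceHomeo {n : ℕ} (γ : Fin n → Ordinal.{u}) (i₀ : Fin n) (β : Ordinal.{u})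
    (hβ : β < γ i₀) :
    ↥{x : Π i : Fin n, ↥(Set.Iio (γ i)) | (x i₀ : Ordinal) = β} ≃ₜ
      (Π i : Fin n, ↥(Set.Iio (Function.update γ i₀ 1 i))) where
  toFun z i := ⟨if i = i₀ then 0 else (z.1 i : Ordinal), by
    rcases eq_or_ne i i₀ with hi | hi
    · simp only [if_pos hi, Set.mem_Iio]
      have : Function.update γ i₀ 1 i = 1 := by rw [hi, Function.update_self]
      rw [this]; exact zero_lt_one
    · simp only [if_neg hi, Set.mem_Iio]
      exact (z.1 i).2.trans_eq (Function.update_of_ne hi 1 γ).symm⟩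
  invFun y := ⟨fun i => ⟨if i = i₀ then β else (y i : Ordinal), by
      rcases eq_or_ne i i₀ with hi | hi
      · simp only [if_pos hi, Set.mem_Iio, hi]; exact hβ
      · simp only [if_neg hi, Set.mem_Iio]
        exact (y i).2.trans_eq (Function.update_of_ne hi 1 γ)⟩,
    by simp⟩
  left_inv z := by
    apply Subtype.ext; funext i
    apply Subtype.ext
    rcases eq_or_ne i i₀ with hi | hi
    · simp only [if_pos hi]
      rw [hi]; exact z.2.symm
    · simp only [if_neg hi]
  right_inv y := by
    funext i
    apply Subtype.ext
    rcases eq_or_ne i i₀ with hi | hi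
    · simp only [if_pos hi]
      have h1 : Function.update γ i₀ 1 i = 1 := by rw [hi, Function.update_self]
      have h2 : ((y i : Ordinal)) < 1 := (y i).2.trans_eq h1
      rw [Ordinal.lt_one_iff_zero] at h2
      exact h2.symm
    · simp only [if_neg hi]
  continuous_toFun := continuous_pi fun i => Continuous.subtype_mk (by
    rcases eq_or_ne i i₀ with hi | hi
    · simp only [if_pos hi]
      exact continuous_const
    · simp only [if_neg hi]
      exact continuous_subtype_val.comp ((continuous_apply i).comp continuous_subtype_val)) _
  continuous_invFun := by
    apply Continuous.subtype_mk
    apply continuous_pi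
    intro i
    apply Continuous.subtype_mk
    rcases eq_or_ne i i₀ with hi | hi
    · simp only [if_pos hi]; exact continuous_const
    · simp only [if_neg hi]; exact continuous_subtype_val.comp (continuous_apply i)


/-- In a finite product of `ω`-complete nonzero ordinals, any countable family of closed
sets that are "big" (contain points above any given point) has nonempty intersection. -/
lemma bigFIP {n : ℕ} {γ : Fin n → Ordinal.{u}} (h0 : ∀ i, 0 < γ i)
    (hsup : ∀ (i : Fin n) (g : ℕ → Ordinal.{u}), (∀ k, g k < γ i) → (⨆ k, g k) < γ i)
    (Fb : Set (Set (Π i : Fin n, ↥(Set.Iio (γ i))))) (hc : Fb.Countable)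
    (hcl : ∀ F ∈ Fb, IsClosed F)
    (hbig : ∀ F ∈ Fb, ∀ δ : (Π i : Fin n, ↥(Set.Iio (γ i))),
      ∃ x ∈ F, ∀ i, (δ i : Ordinal) ≤ (x i : Ordinal)) :
    (⋂₀ Fb).Nonempty := by
  have p0 : (Π i : Fin n, ↥(Set.Iio (γ i))) := fun i => ⟨0, h0 i⟩
  rcases Fb.eq_empty_or_nonempty with hFb | hFb
  · exact ⟨p0, by simp [hFb]⟩
  obtain ⟨e, he⟩ := Set.Countable.exists_eq_range hc hFb
  have hbig' : ∀ (k : ℕ) (δ : Π i : Fin n, ↥(Set.Iio (γ i))), ∃ x ∈ e k, ∀ i, (δ i : Ordinal) ≤ (x i : Ordinal) := by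
    intro k δ
    exact hbig (e k) (he ▸ Set.mem_range_self k) δ
  choose f hf1 hf2 using hbig'
  set g : ℕ → ℕ := fun m => (Nat.unpair m).1 with hg
  set seq : ℕ → (Π i : Fin n, ↥(Set.Iio (γ i))) := fun m => Nat.rec (f (g 0) p0) (fun m ih => f (g (m + 1)) ih) m with hseq
  have hmem : ∀ m, seq m ∈ e (g m) := by
    intro m
    cases m with
    | zero => exact hf1 (g 0) p0
    | succ m => exact hf1 (g (m + 1)) (seq m)
  have hstep : ∀ m i, (seq m i : Ordinal) ≤ (seq (m + 1) i : Ordinal) := by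
    intro m i
    exact hf2 (g (m + 1)) (seq m) i
  have hmono : ∀ {m m'}, m ≤ m' → ∀ i, (seq m i : Ordinal) ≤ (seq m' i : Ordinal) := by
    intro m m' h
    induction h with
    | refl => exact fun i => le_rfl
    | step h ih => exact fun i => (ih i).trans (hstep _ i)
  set y : (Π i : Fin n, ↥(Set.Iio (γ i))) := fun i => ⟨⨆ m, (seq m i : Ordinal), hsup i _ (fun m => (seq m i).2)⟩ with hy
  refine ⟨y, ?_⟩
  intro F hF
  obtain ⟨k, rfl⟩ : ∃ k, e k = F := by
    have := he ▸ hF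
    exact this
  -- the subsequence along `Nat.pair k j` lies in `e k` and converges to `y`
  have hsub_mem : ∀ j, seq (Nat.pair k j) ∈ e k := by
    intro j
    have hgk : g (Nat.pair k j) = k := by simp [hg, Nat.unpair_pair]
    have h := hmem (Nat.pair k j)
    rwa [hgk] at h
  have htend : Tendsto (fun j => seq (Nat.pair k j)) atTop (𝓝 y) := by
    rw [tendsto_pi_nhds]
    intro i
    rw [(IsEmbedding.subtypeVal).tendsto_nhds_iff]
    have hmono2 : Monotone fun j => (seq (Nat.pair k j) i : Ordinal) := by
      intro a b hab
      rcases Nat.eq_or_lt_of_le hab with h | h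
      · exact h ▸ le_rfl
      · exact hmono (Nat.pair_lt_pair_right k h).le i
    have hsupeq : (⨆ j, (seq (Nat.pair k j) i : Ordinal)) = (y i : Ordinal) := by
      apply le_antisymm
      · exact ciSup_le fun j => le_ciSup (Ordinal.bddAbove_range _) (Nat.pair k j)
      · refine ciSup_le fun m => ?_
        calc (seq m i : Ordinal) ≤ (seq (Nat.pair k m) i : Ordinal) :=
              hmono (Nat.right_le_pair k m) i
          _ ≤ _ := le_ciSup (Ordinal.bddAbove_range _) m
    have := tendsto_atTop_ciSup hmono2 (Ordinal.bddAbove_range _)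
    rw [hsupeq] at this
    exact this
  exact (hcl _ hF).mem_of_tendsto htend (Eventually.of_forall hsub_mem)


lemma sum_update_lt {n : ℕ} (γ : Fin n → Ordinal.{u}) (i₀ : Fin n) (b : Ordinal.{u})
    (hb : b < γ i₀) :
    Function.update γ i₀ b < γ := by
  refine lt_of_le_of_ne (fun i => ?_) (fun h => ?_)
  · rcases eq_or_ne i i₀ with hi | hi
    · rw [hi, Function.update_self]; exact hb.le
    · rw [Function.update_of_ne hi]
  · have := congrFun h i₀
    rw [Function.update_self] at this
    exact hb.ne this

lemma ES_main : ∀ (n : ℕ) (γ : Fin n → Ordinal.{u}),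
    ExponentiallySeparable (Π i : Fin n, ↥(Set.Iio (γ i))) := by
  intro n γ
  induction γ using WellFoundedLT.induction with
  | ind γ IH =>
  have key : ∀ (i₀ : Fin n) (b : Ordinal.{u}), b < γ i₀ →
      ExponentiallySeparable (Π i : Fin n, ↥(Set.Iio (Function.update γ i₀ b i))) := by
    intro i₀ b hb
    exact IH _ (sum_update_lt γ i₀ b hb)
  have keyBox : ∀ (i₀ : Fin n) (b : Ordinal.{u}), b < γ i₀ →
      ExponentiallySeparable
        ↥{x : Π i : Fin n, ↥(Set.Iio (γ i)) | ∀ i, (x i : Ordinal) < Function.update γ i₀ b i} := by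
    intro i₀ b hb
    refine ES_of_homeomorph (boxHomeo γ (Function.update γ i₀ b) ?_).symm (key i₀ b hb)
    intro i
    rcases eq_or_ne i i₀ with hi | hi
    · rw [hi, Function.update_self]; exact hb.le
    · rw [Function.update_of_ne hi]
  by_cases h0 : ∃ i, γ i = 0
  · obtain ⟨i, hi⟩ := h0
    intro F hF hcl
    refine ⟨∅, Set.countable_empty, ?_⟩
    rintro G hG ⟨x, hx⟩
    exact absurd (lt_of_lt_of_eq ((x i).2 : (x i : Ordinal) < γ i) hi) (not_lt_of_ge zero_le)
  push_neg at h0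
  by_cases hsucc : ∃ (i₀ : Fin n) (β : Ordinal.{u}), 1 ≤ β ∧ γ i₀ = β + 1
  · obtain ⟨i₀, β, hβ1, hγs⟩ := hsucc
    have hβlt : β < γ i₀ := by
      rw [hγs, Ordinal.add_one_eq_succ]; exact Order.lt_succ β
    have h1lt : 1 < γ i₀ := by
      rw [hγs]
      calc (1 : Ordinal) ≤ β := hβ1
        _ < β + 1 := by rw [Ordinal.add_one_eq_succ]; exact Order.lt_succ β
    apply ES_iUnion (ι := Bool)
      (Y := fun b => cond b
        {x : Π i : Fin n, ↥(Set.Iio (γ i)) | ∀ i, (x i : Ordinal) < Function.update γ i₀ β i}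
        {x : Π i : Fin n, ↥(Set.Iio (γ i)) | (x i₀ : Ordinal) = β})
    · intro x
      have hx : (x i₀ : Ordinal) < β + 1 :=
        lt_of_lt_of_eq ((x i₀).2 : (x i₀ : Ordinal) < γ i₀) hγs
      rw [Ordinal.add_one_eq_succ, Order.lt_succ_iff] at hx
      rcases lt_or_eq_of_le hx with hx | hx
      · refine ⟨true, ?_⟩
        intro j
        rcases eq_or_ne j i₀ with hj | hj
        · subst hj; rw [Function.update_self]; exact hx
        · rw [Function.update_of_ne hj]; exact (x j).2
      · exact ⟨false, hx⟩
    · intro b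
      cases b
      · exact ES_of_homeomorph (sliceHomeo γ i₀ β hβlt).symm (key i₀ 1 h1lt)
      · exact keyBox i₀ β hβlt
  by_cases hcof : ∃ i₀ : Fin n, Order.IsSuccLimit (γ i₀) ∧ Ordinal.cof (γ i₀) = Cardinal.aleph0
  · obtain ⟨i₀, hlim, hcofeq⟩ := hcof
    obtain ⟨ι, f, hlsub, hmk⟩ := Ordinal.exists_lsub_cof (γ i₀)
    haveI : Countable ι := Cardinal.mk_le_aleph0_iff.1 (by rw [hmk, hcofeq])
    apply ES_iUnion (ι := ι)
      (Y := fun k => {x : Π i : Fin n, ↥(Set.Iio (γ i)) |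
        ∀ i, (x i : Ordinal) < Function.update γ i₀ (f k + 1) i})
    · intro x
      have hx : (x i₀ : Ordinal) < Ordinal.lsub f :=
        lt_of_lt_of_eq ((x i₀).2 : (x i₀ : Ordinal) < γ i₀) hlsub.symm
      obtain ⟨k, hk⟩ := Ordinal.lt_lsub_iff.1 hx
      refine ⟨k, ?_⟩
      intro j
      rcases eq_or_ne j i₀ with hj | hj
      · subst hj; rw [Function.update_self]
        refine lt_of_le_of_lt hk ?_
        rw [Ordinal.add_one_eq_succ]; exact Order.lt_succ _
      · rw [Function.update_of_ne hj]; exact (x j).2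
    · intro k
      refine keyBox i₀ (f k + 1) ?_
      rw [Ordinal.add_one_eq_succ]
      exact hlim.succ_lt (hlsub ▸ Ordinal.lt_lsub f k)
  -- final case: each factor is 1 or a limit of uncountable cofinality
  push_neg at hsucc hcof
  have h0' : ∀ i, 0 < γ i := fun i => pos_iff_ne_zero.2 (h0 i)
  have hone : ∀ i, γ i = 1 ∨ Order.IsSuccLimit (γ i) := by
    intro i
    rcases Ordinal.zero_or_succ_or_isSuccLimit (γ i) with h | ⟨a, ha⟩ | h
    · exact absurd h (h0 i)
    · left
      rcases eq_or_ne a 0 with h | h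
      · rw [← ha, h, Ordinal.succ_zero]
      · exact absurd (by rw [← ha, Ordinal.add_one_eq_succ] : γ i = a + 1) (hsucc i a (Ordinal.one_le_iff_ne_zero.2 h))
    · exact Or.inr h
  have hsup : ∀ (i : Fin n) (g : ℕ → Ordinal.{u}), (∀ k, g k < γ i) → (⨆ k, g k) < γ i := by
    intro i g hg
    rcases hone i with h1 | hlim
    · have hz : ∀ k, g k = 0 := fun k => Ordinal.lt_one_iff_zero.1 (h1 ▸ hg k)
      have : (⨆ k, g k) ≤ 0 := ciSup_le fun k => (hz k).le
      exact lt_of_le_of_lt this (h1 ▸ zero_lt_one)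
    · have hℵ : (Cardinal.aleph0 : Cardinal.{u}) < (γ i).cof :=
        lt_of_le_of_ne (Ordinal.aleph0_le_cof.2 hlim) (Ne.symm (hcof i hlim))
      refine Ordinal.iSup_lt_ord_lift ?_ hg
      rwa [Cardinal.mk_nat, Cardinal.lift_aleph0]
  intro F hF hcl
  set Big : Set (Π i : Fin n, ↥(Set.Iio (γ i))) → Prop :=
    fun C => ∀ δ : Π i : Fin n, ↥(Set.Iio (γ i)), ∃ x ∈ C, ∀ i, (δ i : Ordinal) ≤ (x i : Ordinal)
    with hBig
  obtain ⟨p, hp⟩ := bigFIP h0' hsup {F' ∈ F | Big F'} (hF.mono (Set.sep_subset _ _))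
    (fun F' hF' => hcl _ hF'.1) (fun F' hF' => hF'.2)
  obtain ⟨e, he⟩ : ∃ e : ℕ → Set (Π i : Fin n, ↥(Set.Iio (γ i))), F ⊆ Set.range e := by
    rcases F.eq_empty_or_nonempty with h | h
    · exact ⟨fun _ => ∅, by rw [h]; exact Set.empty_subset _⟩
    · obtain ⟨e, he⟩ := hF.exists_eq_range h
      exact ⟨e, he.le⟩
  have hw : ∀ k : ℕ, ∃ δ : Π i : Fin n, ↥(Set.Iio (γ i)),
      ¬ Big (e k) → ∀ x ∈ e k, ∃ i, (x i : Ordinal) < (δ i : Ordinal) := by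
    intro k
    by_cases h : Big (e k)
    · exact ⟨fun i => ⟨0, h0' i⟩, fun h' => absurd h h'⟩
    · simp only [hBig] at h
      push_neg at h
      obtain ⟨δ, hδ⟩ := h
      exact ⟨δ, fun _ => hδ⟩
  choose w hwspec using hw
  set D : Fin n → Ordinal.{u} := fun i => ⨆ k, (w k i : Ordinal) with hD'
  have hD : ∀ i, D i < γ i := fun i => hsup i _ fun k => (w k i).2
  have hRES : ∀ i : Fin n, ExponentiallySeparable
      ↥{x : Π i : Fin n, ↥(Set.Iio (γ i)) | ∀ j, (x j : Ordinal) < Function.update γ i (D i) j} :=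
    fun i => keyBox i (D i) (hD i)
  choose A hA hAd using fun i => ES_trace _ (hRES i) F hF hcl
  refine ⟨insert p (⋃ i, A i), (Set.countable_iUnion hA).insert p, ?_⟩
  rintro G hG ⟨x, hx⟩
  by_cases hGb : ∀ F' ∈ G, Big F'
  · exact ⟨p, Set.mem_insert _ _, fun t ht => hp t ⟨hG ht, hGb t ht⟩⟩
  · push_neg at hGb
    obtain ⟨F₀, hF₀G, hF₀nb⟩ := hGb
    obtain ⟨k, hk⟩ := he (hG hF₀G)
    obtain ⟨i, hi⟩ := hwspec k (by rw [hk]; exact hF₀nb) x (by rw [hk]; exact hx F₀ hF₀G)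
    have hxD : (x i : Ordinal) < D i :=
      lt_of_lt_of_le hi (le_ciSup (Ordinal.bddAbove_range _) k)
    have hxR : x ∈ {x : Π i : Fin n, ↥(Set.Iio (γ i)) |
        ∀ j, (x j : Ordinal) < Function.update γ i (D i) j} := by
      intro j
      rcases eq_or_ne j i with hj | hj
      · subst hj; rw [Function.update_self]; exact hxD
      · rw [Function.update_of_ne hj]; exact (x j).2
    obtain ⟨a, haA, ha⟩ := hAd i G hG ⟨x, hx, hxR⟩
    exact ⟨a, Set.mem_insert_of_mem _ (Set.mem_iUnion.2 ⟨i, haA⟩), ha⟩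

/-- The product of any finite collection of nonzero ordinals
(each with its order topology) is exponentially separable. -/
theorem finite_prod_nonzero_ordinals_exponentiallySeparable
    (n : ℕ) (γ : Fin n → Ordinal) (hγ : ∀ i, γ i ≠ 0) :
    ExponentiallySeparable (Π i : Fin n, ↥(Set.Iio (γ i))) :=
  ES_main n γ
end

section
/- Let X be a completely regular Hausdorff (Tychonoff) topological space that is hereditarily Lindelöf. If X is functionally countable, then every subspace of X is exponentially separable. -/
/-!
A regular hereditarily Lindelöf space is perfectly normal, so every closed set `C` is the
zero set of a continuous `f : X → [0, 1]`. As `f` has countable range, one can pick thresholds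
`aₙ ↓ 0` outside it; then each `{f < aₙ}` is clopen and `C = ⋂ₙ {f < aₙ}`. For countably many
closed sets, the clopen sets obtained this way define a continuous map `P` from `X` into a
Cantor cube, and `P` has countable range because the Cantor cube embeds into `ℝ`. Every closed
set of the family is saturated for `P`, so one point of `Y` for each value of `P` on `Y` is
enough.
-/

open Set Topology

theorem IsClosed.isGδ_of_hereditarilyLindelofSpace {X : Type*} [TopologicalSpace X]
    [RegularSpace X] [HereditarilyLindelofSpace X] {C : Set X} (hC : IsClosed C) : IsGδ C := by
  choose t ht_nhds ht_closed ht_sub using fun x : ↥Cᶜ =>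
    exists_mem_nhds_isClosed_subset (hC.isOpen_compl.mem_nhds x.2)
  obtain ⟨s, hs, hs_eq⟩ := eq_open_union_countable (fun x => interior (t x))
    fun _ => isOpen_interior
  have hC_eq : C = ⋂ x ∈ s, (t x)ᶜ := by
    refine Subset.antisymm (fun y hy => mem_iInter₂.mpr fun x _ hyx => ht_sub x hyx hy) ?_
    intro y hy
    by_contra hyC
    have hy_int : y ∈ ⋃ x, interior (t x) :=
      mem_iUnion.mpr ⟨⟨y, hyC⟩, mem_interior_iff_mem_nhds.mpr (ht_nhds ⟨y, hyC⟩)⟩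
    rw [← hs_eq] at hy_int
    obtain ⟨x, hxs, hyx⟩ := mem_iUnion₂.mp hy_int
    exact mem_iInter₂.mp hy x hxs (interior_subset hyx)
  rw [hC_eq]
  exact .biInter_of_isOpen hs fun x _ => (ht_closed x).isOpen_compl

instance PerfectlyNormalSpace.of_regularSpace_hereditarilyLindelofSpace {X : Type*}
    [TopologicalSpace X] [RegularSpace X] [HereditarilyLindelofSpace X] :
    PerfectlyNormalSpace X where
  closed_gdelta _ hC := hC.isGδ_of_hereditarilyLindelofSpace

theorem isClopen_preimage_Iio_of_notMem_range {X α : Type*} [TopologicalSpace X] [LinearOrder α]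
    [TopologicalSpace α] [OrderClosedTopology α] {f : X → α} (hf : Continuous f) {a : α}
    (ha : a ∉ range f) : IsClopen (f ⁻¹' Iio a) := by
  have hIio_eq_Iic : f ⁻¹' Iio a = f ⁻¹' Iic a := by
    ext x
    exact ⟨le_of_lt, fun hx => lt_of_le_of_ne hx fun hxa => ha ⟨x, hxa⟩⟩
  exact ⟨hIio_eq_Iic ▸ isClosed_Iic.preimage hf, isOpen_Iio.preimage hf⟩

namespace FunctionallyCountable

variable {X : Type*} [TopologicalSpace X]

theorem exists_isClopen_iInter_eq [PerfectlyNormalSpace X] (hX : FunctionallyCountable X)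
    {C : Set X} (hC : IsClosed C) :
    ∃ U : ℕ → Set X, (∀ n, IsClopen (U n)) ∧ ⋂ n, U n = C := by
  obtain ⟨f, rfl, hf01⟩ :=
    perfectlyNormalSpace_iff_forall_isClosed_preimage_zero.mp ‹_› C hC
  have hdense : Dense (range f)ᶜ := (hX f f.continuous).dense_compl ℝ
  choose a ha_range ha_pos ha_lt using fun n : ℕ =>
    hdense.exists_between (Nat.one_div_pos_of_nat (n := n))
  refine ⟨fun n => f ⁻¹' Iio (a n),
    fun n => isClopen_preimage_Iio_of_notMem_range f.continuous (ha_range n), ?_⟩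
  ext x
  simp only [mem_iInter, mem_preimage, mem_Iio, mem_singleton_iff]
  refine ⟨fun hx => ?_, fun hx n => hx ▸ ha_pos n⟩
  by_contra hx0
  obtain ⟨n, hn⟩ := exists_nat_one_div_lt (lt_of_le_of_ne (hf01 x).1 (Ne.symm hx0))
  exact lt_asymm (hx n) ((ha_lt n).trans hn)

theorem countable_range_of_continuous_bool {ι : Type*} [Countable ι]
    (hX : FunctionallyCountable X) {f : X → ι → Bool} (hf : Continuous f) :
    (range f).Countable := by
  rcases isEmpty_or_nonempty ι with _ | _
  · exact (subsingleton_of_subsingleton).countable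
  obtain ⟨g, hg⟩ := exists_surjective_nat ι
  let e : (ι → Bool) → ℝ := fun b => cantorSetHomeomorphNatToBool.symm (b ∘ g)
  have he_cont : Continuous e := continuous_subtype_val.comp <|
    cantorSetHomeomorphNatToBool.symm.continuous.comp <|
      continuous_pi fun n => continuous_apply (g n)
  have he_inj : Function.Injective e := Subtype.val_injective.comp <|
    cantorSetHomeomorphNatToBool.symm.injective.comp hg.injective_comp_right
  refine ((hX _ (he_cont.comp hf)).preimage he_inj).mono ?_
  rintro _ ⟨x, rfl⟩
  exact ⟨x, rfl⟩

end FunctionallyCountable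

theorem exists_countable_inter_sInter_nonempty_of_countable_range {Y ι : Type*}
    {F : Set (Set Y)} (p : Y → ι) (hp : (range p).Countable)
    (hF : ∀ s ∈ F, ∀ ⦃y z⦄, p y = p z → y ∈ s → z ∈ s) :
    ∃ A : Set Y, A.Countable ∧ ∀ G ⊆ F, (⋂₀ G).Nonempty → (A ∩ ⋂₀ G).Nonempty := by
  have := hp.to_subtype
  refine ⟨range (rangeSplitting p), countable_range _, fun G hG ⟨y, hy⟩ => ?_⟩
  refine ⟨rangeSplitting p ⟨p y, mem_range_self y⟩, mem_range_self _,
    fun s hs => hF s (hG hs) ?_ (hy s hs)⟩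
  exact (apply_rangeSplitting p ⟨p y, mem_range_self y⟩).symm

theorem subspaces_exponentiallySeparable_of_hereditarilyLindelof_general
    {X : Type*} [TopologicalSpace X] [CompletelyRegularSpace X]
    [HereditarilyLindelofSpace X]
    (hfc : FunctionallyCountable X) (Y : Set X) :
    ExponentiallySeparable ↥Y := by
  intro F hF hF_closed
  have := hF.to_subtype
  choose D hD_closed hD using fun s : F => isClosed_induced_iff.mp (hF_closed s s.2)
  choose U hU_clopen hU using fun s : F => hfc.exists_isClopen_iInter_eq (hD_closed s)
  let P : X → F × ℕ → Bool := fun x i => (U i.1 i.2).boolIndicator x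
  have hP : Continuous P := continuous_pi fun i =>
    (continuous_boolIndicator_iff_isClopen _).mpr (hU_clopen i.1 i.2)
  have mem_iff_pattern (s : F) (y : Y) : y ∈ (s : Set Y) ↔ ∀ n, P y (s, n) = true := by
    simp only [← hD s, ← hU s, mem_preimage, mem_iInter, P, ← mem_iff_boolIndicator]
  refine exists_countable_inter_sInter_nonempty_of_countable_range (P ∘ (↑))
    ((hfc.countable_range_of_continuous_bool hP).mono (range_comp_subset_range _ _)) ?_
  intro s hs y z hyz hy
  rw [mem_iff_pattern ⟨s, hs⟩] at hy ⊢
  rwa [← show P y = P z from hyz]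

/-- If `X` is Tychonoff (completely regular Hausdorff),
hereditarily Lindelöf and functionally countable, then every subspace of `X`
is exponentially separable. -/
theorem subspaces_exponentiallySeparable_of_hereditarilyLindelof
    {X : Type*} [TopologicalSpace X] [T2Space X] [CompletelyRegularSpace X]
    [HereditarilyLindelofSpace X]
    (hfc : FunctionallyCountable X) (Y : Set X) :
    ExponentiallySeparable ↥Y :=
  subspaces_exponentiallySeparable_of_hereditarilyLindelof_general hfc Y
end

section
/- Let X be a sub-Ostaszewski space, i.e., an uncountable Hausdorff topological space in which every closed subset is either countable or has countable complement. Then every subspace Y of X is exponentially separable. -/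
open Set Topology

theorem Topology.IsEmbedding.countable_or_compl_countable_of_isClosed {Y X : Type*}
    [TopologicalSpace Y] [TopologicalSpace X] {f : Y → X} (hf : IsEmbedding f)
    (hX : ∀ C : Set X, IsClosed C → C.Countable ∨ Cᶜ.Countable)
    {s : Set Y} (hs : IsClosed s) : s.Countable ∨ sᶜ.Countable := by
  obtain ⟨t, ht, rfl⟩ := hf.isInducing.isClosed_iff.1 hs
  exact (hX t ht).imp (·.preimage hf.injective) (·.preimage hf.injective)

theorem exists_countable_inter_sInter_nonempty {α : Type*} (F : Set (Set α)) (hF : F.Countable)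
    (hFs : ∀ s ∈ F, s.Countable ∨ sᶜ.Countable) :
    ∃ A : Set α, A.Countable ∧ ∀ G ⊆ F, (⋂₀ G).Nonempty → (A ∩ ⋂₀ G).Nonempty := by
  by_cases hα : Countable α
  · exact ⟨univ, countable_univ, fun G _ hG => by rwa [univ_inter]⟩
  set U := {s ∈ F | ¬ s.Countable}
  have hU : (⋂₀ U)ᶜ.Countable := by
    rw [compl_sInter]
    refine ((hF.mono (sep_subset F _)).image _).sUnion ?_
    rintro _ ⟨s, hs, rfl⟩
    exact (hFs s hs.1).resolve_left hs.2
  obtain ⟨y₀, hy₀⟩ : (⋂₀ U).Nonempty := by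
    by_contra hempty
    rw [not_nonempty_iff_eq_empty.1 hempty, compl_empty, countable_univ_iff] at hU
    exact hα hU
  refine ⟨⋃₀ {s ∈ F | s.Countable} ∪ {y₀},
    ((hF.mono (sep_subset F _)).sUnion fun s hs => hs.2).union (countable_singleton y₀), ?_⟩
  rintro G hGF ⟨x, hx⟩
  by_cases hG : ∃ s ∈ G, s.Countable
  · obtain ⟨s, hsG, hs⟩ := hG
    exact ⟨x, Or.inl ⟨s, ⟨hGF hsG, hs⟩, hx s hsG⟩, hx⟩
  · push Not at hG
    exact ⟨y₀, Or.inr rfl, fun s hsG => hy₀ s ⟨hGF hsG, hG s hsG⟩⟩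

theorem ExponentiallySeparable.of_countable_or_compl_countable {X : Type*} [TopologicalSpace X]
    (hX : ∀ C : Set X, IsClosed C → C.Countable ∨ Cᶜ.Countable) : ExponentiallySeparable X :=
  fun F hF hFclosed => exists_countable_inter_sInter_nonempty F hF fun s hs => hX s (hFclosed s hs)

theorem subOstaszewski_subspaces_exponentiallySeparable_general
    {X : Type*} [TopologicalSpace X]
    (hX : ∀ C : Set X, IsClosed C → C.Countable ∨ Cᶜ.Countable)
    (Y : Set X) :
    ExponentiallySeparable ↥Y :=
  .of_countable_or_compl_countable fun _ =>
    IsEmbedding.subtypeVal.countable_or_compl_countable_of_isClosed hX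

/-- If `X` is sub-Ostaszewski (an uncountable Hausdorff space
in which every closed set is countable or has countable complement), then every
subspace of `X` is exponentially separable. -/
theorem subOstaszewski_subspaces_exponentiallySeparable
    {X : Type*} [TopologicalSpace X] [T2Space X] [Uncountable X]
    (hX : ∀ C : Set X, IsClosed C → C.Countable ∨ Cᶜ.Countable)
    (Y : Set X) :
    ExponentiallySeparable ↥Y :=
  subOstaszewski_subspaces_exponentiallySeparable_general hX Y
end

section
/- Let X be a sub-Ostaszewski space, i.e., an uncountable Hausdorff topological space in which every closed subset is either countable or has countable complement. Then every subspace of X is functionally countable. -/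
/-- If `X` is sub-Ostaszewski (an uncountable Hausdorff space
in which every closed set is countable or has countable complement), then every
subspace of `X` is functionally countable. -/
theorem subOstaszewski_subspaces_functionallyCountable
    {X : Type*} [TopologicalSpace X] [T2Space X] [Uncountable X]
    (hX : ∀ C : Set X, IsClosed C → C.Countable ∨ Cᶜ.Countable)
    (Y : Set X) :
    FunctionallyCountable ↥Y := by
  intro f hf
  by_cases hY : Y.Countable
  · have := hY.to_subtype
    exact Set.countable_range f
  by_contra hR
  -- helper: if the closure of the image of a set `s ⊆ Y` is countable, then `f '' s` is countable
  have count_of : ∀ s : Set Y, (closure (Subtype.val '' s)).Countable → (f '' s).Countable := by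
    intro s hc
    have h1 : (Subtype.val '' s).Countable := hc.mono subset_closure
    have h2 : s.Countable := by
      have : (Subtype.val ⁻¹' (Subtype.val '' s) : Set Y).Countable :=
        h1.preimage Subtype.val_injective
      exact this.mono (Set.subset_preimage_image _ _)
    exact h2.image f
  -- key dichotomy
  have key : ∀ a b : ℝ, a < b →
      (Set.range f ∩ Set.Iic a).Countable ∨ (Set.range f ∩ Set.Ici b).Countable := by
    intro a b hab
    set sA : Set Y := {y | f y ≤ a} with hsA
    set sB : Set Y := {y | b ≤ f y} with hsB
    have hsAc : IsClosed sA := isClosed_Iic.preimage hf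
    have hsBc : IsClosed sB := isClosed_Ici.preimage hf
    have hrA : Set.range f ∩ Set.Iic a ⊆ f '' sA := by
      rintro r ⟨⟨y, rfl⟩, hr⟩
      exact ⟨y, hr, rfl⟩
    have hrB : Set.range f ∩ Set.Ici b ⊆ f '' sB := by
      rintro r ⟨⟨y, rfl⟩, hr⟩
      exact ⟨y, hr, rfl⟩
    rcases hX (closure (Subtype.val '' sA)) isClosed_closure with hA | hA
    · exact Or.inl ((count_of sA hA).mono hrA)
    rcases hX (closure (Subtype.val '' sB)) isClosed_closure with hB | hB
    · exact Or.inr ((count_of sB hB).mono hrB)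
    -- both closures co-countable: then Y is countable, contradiction
    exfalso
    apply hY
    have hsub : Y ⊆ (closure (Subtype.val '' sA))ᶜ ∪ (closure (Subtype.val '' sB))ᶜ := by
      intro x hx
      by_contra hcon
      simp only [Set.mem_union, Set.mem_compl_iff, not_or, not_not] at hcon
      obtain ⟨hxa, hxb⟩ := hcon
      set y : Y := ⟨x, hx⟩ with hy
      have hya : y ∈ closure sA := by
        rw [closure_subtype]; exact hxa
      have hyb : y ∈ closure sB := by
        rw [closure_subtype]; exact hxb
      rw [hsAc.closure_eq] at hya
      rw [hsBc.closure_eq] at hyb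
      have : f y ≤ a := hya
      have : b ≤ f y := hyb
      linarith
    exact (hA.union hB).mono hsub
  -- existence of thresholds where the range is uncountable on one side
  have hCex : ∃ a : ℝ, ¬ (Set.range f ∩ Set.Iic a).Countable := by
    by_contra h
    push_neg at h
    apply hR
    have hsub : Set.range f ⊆ ⋃ n : ℕ, Set.range f ∩ Set.Iic (n : ℝ) := by
      intro r hr
      obtain ⟨n, hn⟩ := exists_nat_ge r
      exact Set.mem_iUnion.2 ⟨n, hr, hn⟩
    exact (Set.countable_iUnion fun n : ℕ => h n).mono hsub
  have hDex : ∃ b : ℝ, ¬ (Set.range f ∩ Set.Ici b).Countable := by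
    by_contra h
    push_neg at h
    apply hR
    have hsub : Set.range f ⊆ ⋃ n : ℕ, Set.range f ∩ Set.Ici (-(n : ℝ)) := by
      intro r hr
      obtain ⟨n, hn⟩ := exists_nat_ge (-r)
      exact Set.mem_iUnion.2 ⟨n, hr, by simpa using neg_le_neg hn⟩
    exact (Set.countable_iUnion fun n : ℕ => h (-(n : ℝ))).mono hsub
  obtain ⟨a0, ha0⟩ := hCex
  obtain ⟨b0, hb0⟩ := hDex
  set U : Set ℝ := {a | ¬ (Set.range f ∩ Set.Iic a).Countable} with hU
  have hUne : U.Nonempty := ⟨a0, ha0⟩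
  have hUbdd : BddBelow U := by
    refine ⟨b0, fun a ha => ?_⟩
    by_contra hlt
    push_neg at hlt
    rcases key a b0 hlt with h | h
    · exact ha h
    · exact hb0 h
  set c := sInf U with hc
  have hlt : ∀ a : ℝ, a < c → (Set.range f ∩ Set.Iic a).Countable := by
    intro a ha
    by_contra h
    exact absurd (csInf_le hUbdd h) (not_le.2 ha)
  have hgt : ∀ b : ℝ, c < b → (Set.range f ∩ Set.Ici b).Countable := by
    intro b hb
    obtain ⟨a, haU, hab⟩ := exists_lt_of_csInf_lt hUne hb
    rcases key a b hab with h | h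
    · exact absurd h haU
    · exact h
  apply hR
  have hsub : Set.range f ⊆
      (⋃ n : ℕ, Set.range f ∩ Set.Iic (c - 1 / (n + 1))) ∪ {c} ∪
      (⋃ n : ℕ, Set.range f ∩ Set.Ici (c + 1 / (n + 1))) := by
    intro r hr
    rcases lt_trichotomy r c with h | h | h
    · obtain ⟨n, hn⟩ := exists_nat_one_div_lt (sub_pos.2 h)
      refine Or.inl (Or.inl (Set.mem_iUnion.2 ⟨n, hr, ?_⟩))
      simp only [Set.mem_Iic]
      linarith
    · exact Or.inl (Or.inr h)
    · obtain ⟨n, hn⟩ := exists_nat_one_div_lt (sub_pos.2 h)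
      refine Or.inr (Set.mem_iUnion.2 ⟨n, hr, ?_⟩)
      simp only [Set.mem_Ici]
      linarith
  refine (Set.Countable.union (Set.Countable.union ?_ (Set.countable_singleton c)) ?_).mono hsub
  · refine Set.countable_iUnion fun n => hlt _ ?_
    have : (0 : ℝ) < 1 / (n + 1) := by positivity
    linarith
  · refine Set.countable_iUnion fun n => hgt _ ?_
    have : (0 : ℝ) < 1 / (n + 1) := by positivity
    linarith
end

section
/- Let X and Y be topological spaces whose sets of isolated points are dense, let A be a countably infinite subset of the set of isolated points of X × Y, and suppose that for every countably infinite set B of isolated points of X (respectively of Y) there exist a point p and an infinite subset of B converging to p. Then there exist a point q ∈ X × Y and an infinite subset C ⊆ A such that C converges to q. -/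
/-- Auxiliary lemma: if `D` is a countably infinite set in `X × Y` whose second
coordinates are isolated, and `D` "converges in the first coordinate" to `p`
(only finitely many points of `D` have first coordinate outside any open
neighborhood of `p`), then (assuming the convergence hypothesis on `Y`) some
infinite subset of `D` converges in `X × Y`. -/
theorem prod_isolated_aux
    {X Y : Type*} [TopologicalSpace X] [TopologicalSpace Y]
    (hY : ∀ B : Set Y, B ⊆ {y : Y | IsOpen ({y} : Set Y)} → B.Countable → B.Infinite →
      ∃ p : Y, ∃ C ⊆ B, C.Infinite ∧ ∀ U : Set Y, IsOpen U → p ∈ U → (C \ U).Finite)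
    (D : Set (X × Y)) (hDc : D.Countable) (hDinf : D.Infinite)
    (hiso : ∀ z ∈ D, IsOpen ({z.2} : Set Y)) (p : X)
    (hfst : ∀ V : Set X, IsOpen V → p ∈ V → {z ∈ D | z.1 ∉ V}.Finite) :
    ∃ q : X × Y, ∃ C ⊆ D, C.Infinite ∧
      ∀ U : Set (X × Y), IsOpen U → q ∈ U → (C \ U).Finite := by
  by_cases hsnd : (Prod.snd '' D).Finite
  · -- some fiber over a second coordinate is infinite
    have hcover : D ⊆ ⋃ y ∈ Prod.snd '' D, {z ∈ D | z.2 = y} := by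
      intro z hz
      simp only [Set.mem_iUnion]
      exact ⟨z.2, ⟨z, hz, rfl⟩, hz, rfl⟩
    have : ∃ y ∈ Prod.snd '' D, {z ∈ D | z.2 = y}.Infinite := by
      by_contra h
      push_neg at h
      exact hDinf ((hsnd.biUnion h).subset hcover)
    obtain ⟨y, hy, hfib⟩ := this
    refine ⟨(p, y), {z ∈ D | z.2 = y}, fun z hz => hz.1, hfib, ?_⟩
    intro U hU hqU
    obtain ⟨V, W, hV, hW, hpV, hyW, hVW⟩ := isOpen_prod_iff.1 hU p y hqU
    refine (hfst V hV hpV).subset ?_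
    rintro z ⟨⟨hzD, hz2⟩, hzU⟩
    refine ⟨hzD, fun hz1 => hzU (hVW ⟨hz1, ?_⟩)⟩
    rw [hz2]; exact hyW
  · -- second coordinates form an infinite set of isolated points of Y
    have hsub : Prod.snd '' D ⊆ {y : Y | IsOpen ({y} : Set Y)} := by
      rintro y ⟨z, hz, rfl⟩; exact hiso z hz
    obtain ⟨q, C₂, hC₂sub, hC₂inf, hC₂conv⟩ :=
      hY (Prod.snd '' D) hsub (hDc.image _) hsnd
    have hsec : ∀ y : Y, ∃ z, y ∈ C₂ → z ∈ D ∧ z.2 = y := by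
      intro y
      by_cases hy : y ∈ C₂
      · obtain ⟨z, hz, rfl⟩ := hC₂sub hy; exact ⟨z, fun _ => ⟨hz, rfl⟩⟩
      · exact ⟨hDinf.nonempty.choose, fun h => absurd h hy⟩
    choose b hb using hsec
    have hbD : ∀ y ∈ C₂, b y ∈ D := fun y hy => (hb y hy).1
    have hbsnd : ∀ y ∈ C₂, (b y).2 = y := fun y hy => (hb y hy).2
    have hbinj : Set.InjOn b C₂ := by
      intro y₁ h₁ y₂ h₂ he
      rw [← hbsnd y₁ h₁, ← hbsnd y₂ h₂, he]
    refine ⟨(p, q), b '' C₂, ?_, hC₂inf.image hbinj, ?_⟩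
    · rintro z ⟨y, hy, rfl⟩; exact hbD y hy
    intro U hU hqU
    obtain ⟨V, W, hV, hW, hpV, hqW, hVW⟩ := isOpen_prod_iff.1 hU p q hqU
    have h1 : {z ∈ D | z.1 ∉ V}.Finite := hfst V hV hpV
    have h2 : (b '' (C₂ \ W)).Finite := (hC₂conv W hW hqW).image b
    refine (h1.union h2).subset ?_
    rintro z ⟨⟨y, hy, rfl⟩, hzU⟩
    by_cases h1V : (b y).1 ∈ V
    · right
      refine ⟨y, ⟨hy, fun hyW => hzU (hVW ⟨h1V, ?_⟩)⟩, rfl⟩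
      rw [hbsnd y hy]; exact hyW
    · exact Or.inl ⟨hbD y hy, h1V⟩

/-- Let `X` and `Y` be spaces whose isolated points are dense,
and suppose every countably infinite set of isolated points of `X`
(respectively of `Y`) has an infinite subset converging to some point.  Then
every countably infinite set `A` of isolated points of `X × Y` has an infinite
subset converging to some point of `X × Y`. -/
theorem prod_isolated_convergent_subset
    {X Y : Type*} [TopologicalSpace X] [TopologicalSpace Y]
    (hdX : Dense {x : X | IsOpen ({x} : Set X)})
    (hdY : Dense {y : Y | IsOpen ({y} : Set Y)})
    (hX : ∀ B : Set X, B ⊆ {x : X | IsOpen ({x} : Set X)} → B.Countable → B.Infinite →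
      ∃ p : X, ∃ C ⊆ B, C.Infinite ∧ ∀ U : Set X, IsOpen U → p ∈ U → (C \ U).Finite)
    (hY : ∀ B : Set Y, B ⊆ {y : Y | IsOpen ({y} : Set Y)} → B.Countable → B.Infinite →
      ∃ p : Y, ∃ C ⊆ B, C.Infinite ∧ ∀ U : Set Y, IsOpen U → p ∈ U → (C \ U).Finite)
    (A : Set (X × Y)) (hA : A ⊆ {z : X × Y | IsOpen ({z} : Set (X × Y))})
    (hAcount : A.Countable) (hAinf : A.Infinite) :
    ∃ q : X × Y, ∃ C ⊆ A, C.Infinite ∧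
      ∀ U : Set (X × Y), IsOpen U → q ∈ U → (C \ U).Finite := by
  have hisoY : ∀ z ∈ A, IsOpen ({z.2} : Set Y) := by
    intro z hz
    have : IsOpen (Prod.snd '' ({z} : Set (X × Y))) := isOpenMap_snd _ (hA hz)
    simpa using this
  by_cases hfstA : (Prod.fst '' A).Finite
  · -- some fiber over a first coordinate is infinite
    have hcover : A ⊆ ⋃ x ∈ Prod.fst '' A, {z ∈ A | z.1 = x} := by
      intro z hz
      simp only [Set.mem_iUnion]
      exact ⟨z.1, ⟨z, hz, rfl⟩, hz, rfl⟩
    have : ∃ x ∈ Prod.fst '' A, {z ∈ A | z.1 = x}.Infinite := by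
      by_contra h
      push_neg at h
      exact hAinf ((hfstA.biUnion h).subset hcover)
    obtain ⟨x, hx, hfib⟩ := this
    obtain ⟨q, C, hCsub, hCinf, hCconv⟩ :=
      prod_isolated_aux hY {z ∈ A | z.1 = x} (hAcount.mono (fun z hz => hz.1)) hfib
        (fun z hz => hisoY z hz.1) x
        (by
          intro V hV hxV
          convert Set.finite_empty
          ext z
          simp only [Set.mem_setOf_eq, Set.mem_empty_iff_false, iff_false, not_and]
          rintro ⟨hzA, rfl⟩ h
          exact h hxV)
    exact ⟨q, C, fun z hz => (hCsub hz).1, hCinf, hCconv⟩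
  · -- first coordinates form an infinite set of isolated points of X
    have hsubX : Prod.fst '' A ⊆ {x : X | IsOpen ({x} : Set X)} := by
      rintro x ⟨z, hz, rfl⟩
      have : IsOpen (Prod.fst '' ({z} : Set (X × Y))) := isOpenMap_fst _ (hA hz)
      simpa using this
    obtain ⟨p, C₁, hC₁sub, hC₁inf, hC₁conv⟩ :=
      hX (Prod.fst '' A) hsubX (hAcount.image _) hfstA
    have hsec : ∀ x : X, ∃ z, x ∈ C₁ → z ∈ A ∧ z.1 = x := by
      intro x
      by_cases hx : x ∈ C₁
      · obtain ⟨z, hz, rfl⟩ := hC₁sub hx; exact ⟨z, fun _ => ⟨hz, rfl⟩⟩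
      · exact ⟨hAinf.nonempty.choose, fun h => absurd h hx⟩
    choose f hf using hsec
    have hfA : ∀ x ∈ C₁, f x ∈ A := fun x hx => (hf x hx).1
    have hffst : ∀ x ∈ C₁, (f x).1 = x := fun x hx => (hf x hx).2
    have hfinj : Set.InjOn f C₁ := by
      intro x₁ h₁ x₂ h₂ he
      rw [← hffst x₁ h₁, ← hffst x₂ h₂, he]
    obtain ⟨q, C, hCsub, hCinf, hCconv⟩ :=
      prod_isolated_aux hY (f '' C₁)
        ((hAcount.mono (fun z hz => by obtain ⟨x, hx, rfl⟩ := hz; exact hfA x hx)))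
        (hC₁inf.image hfinj)
        (fun z hz => by obtain ⟨x, hx, rfl⟩ := hz; exact hisoY _ (hfA x hx)) p
        (by
          intro V hV hpV
          refine ((hC₁conv V hV hpV).image f).subset ?_
          rintro z ⟨⟨x, hx, rfl⟩, hzV⟩
          refine ⟨x, ⟨hx, ?_⟩, rfl⟩
          rwa [← hffst x hx]  )
    refine ⟨q, C, ?_, hCinf, hCconv⟩
    intro z hz
    obtain ⟨x, hx, rfl⟩ := hCsub hz
    exact hfA x hx
end

section
/- Let n be a natural number and let γ_0, ..., γ_{n-1} be ordinals, each endowed with the order topology, such that each γ_i is either a successor ordinal or a limit ordinal of uncountable cofinality. Let {A_k : k < ω} be a countable family of closed subsets of X = ∏_{i<n} γ_i, let 𝓕 = {F ∈ [ω]^{<ω} : ⋂_{k∈F} A_k ≠ ∅}, for each F ∈ 𝓕 pick p_F ∈ ⋂_{k∈F} A_k, and let Y be the closure in X of {p_F : F ∈ 𝓕}. Then Y is compact. -/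
/-- Let `γ_0, …, γ_{n-1}` be ordinals (with their order
topologies), each a successor or a limit of uncountable cofinality, and let
`X = ∏_{i<n} γ_i`.  Given closed sets `A_k ⊆ X` for `k < ω`, let
`𝓕 = {F ∈ [ω]^{<ω} : ⋂_{k ∈ F} A_k ≠ ∅}` and pick `p_F ∈ ⋂_{k ∈ F} A_k` for
each `F ∈ 𝓕`.  Then the closure `Y` of `{p_F : F ∈ 𝓕}` in `X` is compact. -/
theorem closure_of_chosen_points_isCompact
    (n : ℕ) (γ : Fin n → Ordinal)
    (hγ : ∀ i, (∃ β, γ i = β + 1) ∨ (Order.IsSuccLimit (γ i) ∧ Cardinal.aleph0 < (γ i).cof))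
    (A : ℕ → Set (Π i : Fin n, ↥(Set.Iio (γ i))))
    (hA : ∀ k, IsClosed (A k))
    (p : Finset ℕ → Π i : Fin n, ↥(Set.Iio (γ i)))
    (hp : ∀ F : Finset ℕ, (⋂ k ∈ F, A k).Nonempty → p F ∈ ⋂ k ∈ F, A k) :
    IsCompact (closure {y | ∃ F : Finset ℕ, (⋂ k ∈ F, A k).Nonempty ∧ y = p F}) := by
  -- For each coordinate, find a bound `b i < γ i` dominating all `p F i`.
  have hb : ∀ i : Fin n, ∃ b : Ordinal, b < γ i ∧ ∀ F : Finset ℕ, ((p F i : Ordinal)) ≤ b := by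
    intro i
    rcases hγ i with ⟨β, hβ⟩ | ⟨hlim, hcof⟩
    · refine ⟨β, ?_, ?_⟩
      · rw [hβ, Ordinal.add_one_eq_succ]; exact Order.lt_succ β
      · intro F
        have h2 : ((p F i : Ordinal)) < β + 1 := by rw [← hβ]; exact (p F i).2
        rw [Ordinal.add_one_eq_succ, Order.lt_succ_iff] at h2
        exact h2
    · refine ⟨⨆ F : Finset ℕ, ((p F i : Ordinal)), ?_, fun F => Ordinal.le_iSup (fun F : Finset ℕ => ((p F i : Ordinal))) F⟩
      apply Ordinal.iSup_lt_ord_lift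
      · rwa [Cardinal.mk_eq_aleph0 (Finset ℕ), Cardinal.lift_aleph0]
      · intro F; exact (p F i).2
  choose b hblt hble using hb
  -- The compact closed boxes `C i`.
  set C : ∀ i : Fin n, Set ↥(Set.Iio (γ i)) := fun i => Subtype.val ⁻¹' Set.Iic (b i) with hC
  have hCclosed : ∀ i, IsClosed (C i) := fun i => isClosed_Iic.preimage continuous_subtype_val
  have hCcompact : ∀ i, IsCompact (C i) := by
    intro i
    have hemb : Topology.IsEmbedding (Subtype.val : ↥(Set.Iio (γ i)) → Ordinal) :=
      Topology.IsEmbedding.subtypeVal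
    rw [hemb.isCompact_iff]
    have himage : Subtype.val '' (C i) = Set.Icc 0 (b i) := by
      ext o
      constructor
      · rintro ⟨x, hx, rfl⟩
        exact ⟨zero_le, hx⟩
      · rintro ⟨-, h2⟩
        exact ⟨⟨o, lt_of_le_of_lt h2 (hblt i)⟩, h2, rfl⟩
    rw [himage]
    exact isCompact_Icc
  have hpiC : IsCompact (Set.pi Set.univ C) := isCompact_univ_pi hCcompact
  have hpiCclosed : IsClosed (Set.pi Set.univ C) := isClosed_set_pi fun i _ => hCclosed i
  refine hpiC.of_isClosed_subset isClosed_closure ?_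
  apply closure_minimal ?_ hpiCclosed
  rintro y ⟨F, -, rfl⟩ i -
  exact hble i F
end
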